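/- arXiv:2305.12076 — 9 statements merged into one kernel-verified Lean document; each statement's English description precedes it below -/
import Mathlib

section
/- Let C ⊆ ℝ^n be nonempty, closed and convex, let g, h : ℝ^n → ℝ be differentiable with g ρ_g-convex on C and h ρ_h-convex on C (ρ_g, ρ_h ≥ 0), and set f = g − h. Let γ ≥ 0, let x ∈ C and x⁻ ∈ ℝ^n, and suppose z ∈ C minimizes u ↦ g(u) − ⟨∇h(x) + γ(x − x⁻), u⟩ over C. Then f(z) + ((ρ_g + ρ_h − γ)/2)·‖z − x‖² ≤ f(x) + (γ/2)·‖x − x⁻‖². -/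
open scoped RealInnerProductSpace
open Filter Topology

section aux

variable {E : Type*} [NormedAddCommGroup E] [InnerProductSpace ℝ E]

lemma combo_norm_sq (t : ℝ) (z x : E) :
    ‖(1 - t) • z + t • x‖ ^ 2
      = (1 - t) * ‖z‖ ^ 2 + t * ‖x‖ ^ 2 - t * (1 - t) * ‖z - x‖ ^ 2 := by
  have h : ∀ v : E, ‖v‖ ^ 2 = ⟪v, v⟫ := fun v => (real_inner_self_eq_norm_sq v).symm
  simp only [h, real_inner_add_add_self, real_inner_sub_sub_self,
    real_inner_smul_left, real_inner_smul_right]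
  ring

lemma grad_ineq {C : Set E} (hC : Convex ℝ C) {φ : E → ℝ}
    (hconv : ConvexOn ℝ C φ) {x z : E} (hx : x ∈ C) (hz : z ∈ C)
    {d : E →L[ℝ] ℝ} (hd : HasFDerivAt φ d x) :
    φ x + d (z - x) ≤ φ z := by
  have hline : HasDerivAt (fun t : ℝ => x + t • (z - x)) (z - x) 0 := by
    simpa using ((hasDerivAt_id (0 : ℝ)).smul_const (z - x)).const_add x
  have hd' : HasFDerivAt φ d ((fun t : ℝ => x + t • (z - x)) 0) := by simpa using hd
  have hf : HasDerivAt (fun t : ℝ => φ (x + t • (z - x))) (d (z - x)) 0 :=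
    hd'.comp_hasDerivAt 0 hline
  have hslope : Tendsto (slope (fun t : ℝ => φ (x + t • (z - x))) 0) (𝓝[>] 0)
      (𝓝 (d (z - x))) :=
    (hasDerivAt_iff_tendsto_slope.mp hf).mono_left
      (nhdsWithin_mono _ (fun t ht => ne_of_gt ht))
  have hev : ∀ᶠ t in 𝓝[>] (0 : ℝ),
      slope (fun t : ℝ => φ (x + t • (z - x))) 0 t ≤ φ z - φ x := by
    filter_upwards [Ioo_mem_nhdsGT_of_mem (by norm_num : (0:ℝ) ∈ Set.Ico 0 1)]
      with t ht
    have ht0 : 0 < t := ht.1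
    have ht1 : t < 1 := ht.2
    have hw : x + t • (z - x) = (1 - t) • x + t • z := by
      simp [smul_sub, sub_smul]; abel
    have hcv := hconv.2 hx hz (by linarith : (0:ℝ) ≤ 1 - t) ht0.le (by ring)
    have : φ (x + t • (z - x)) ≤ (1 - t) * φ x + t * φ z := by rw [hw]; simpa using hcv
    rw [slope_def_field]
    simp only [zero_smul, add_zero, sub_zero]
    rw [div_le_iff₀ ht0]
    nlinarith
  have := le_of_tendsto hslope hev
  linarith

end aux
/-- One-step descent estimate for the inertial DCA subproblem. -/
theorem stmt0 {n : ℕ} (C : Set (EuclideanSpace ℝ (Fin n)))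
    (hCne : C.Nonempty) (hCcl : IsClosed C) (hCcv : Convex ℝ C)
    (g h : EuclideanSpace ℝ (Fin n) → ℝ)
    (g' h' : EuclideanSpace ℝ (Fin n) → EuclideanSpace ℝ (Fin n))
    (hg : ∀ u, HasGradientAt g (g' u) u) (hh : ∀ u, HasGradientAt h (h' u) u)
    (ρg ρh : ℝ) (hρg : 0 ≤ ρg) (hρh : 0 ≤ ρh)
    (hgconv : ConvexOn ℝ C (fun u => g u - ρg / 2 * ‖u‖ ^ 2))
    (hhconv : ConvexOn ℝ C (fun u => h u - ρh / 2 * ‖u‖ ^ 2))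
    (γ : ℝ) (hγ : 0 ≤ γ)
    (x xm z : EuclideanSpace ℝ (Fin n)) (hx : x ∈ C) (hz : z ∈ C)
    (hmin : ∀ u ∈ C, g z - ⟪h' x + γ • (x - xm), z⟫ ≤ g u - ⟪h' x + γ • (x - xm), u⟫) :
    (g z - h z) + (ρg + ρh - γ) / 2 * ‖z - x‖ ^ 2 ≤
      (g x - h x) + γ / 2 * ‖x - xm‖ ^ 2 := by
  set c : EuclideanSpace ℝ (Fin n) := h' x + γ • (x - xm) with hc
  -- Step A : strong minimality
  have key : g z + ρg / 2 * ‖z - x‖ ^ 2 ≤ g x + ⟪c, z - x⟫ := by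
    have keyt : ∀ t : ℝ, 0 < t → t ≤ 1 →
        g z + ρg / 2 * ‖z - x‖ ^ 2 ≤ g x + ⟪c, z - x⟫ + t * (ρg / 2 * ‖z - x‖ ^ 2) := by
      intro t ht0 ht1
      have hw : (1 - t) • z + t • x ∈ C :=
        hCcv hz hx (show (0:ℝ) ≤ 1 - t by linarith) (show (0:ℝ) ≤ t from ht0.le)
          (show (1 - t) + t = 1 by ring)
      have hm := hmin _ hw
      have hcv := hgconv.2 hz hx (show (0:ℝ) ≤ 1 - t by linarith)
        (show (0:ℝ) ≤ t from ht0.le) (show (1 - t) + t = 1 by ring)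
      simp only [smul_eq_mul] at hcv
      have hcw : ⟪c, (1 - t) • z + t • x⟫ = (1 - t) * ⟪c, z⟫ + t * ⟪c, x⟫ := by
        rw [inner_add_right, real_inner_smul_right, real_inner_smul_right]
      have hcs : ⟪c, z - x⟫ = ⟪c, z⟫ - ⟪c, x⟫ := inner_sub_right c z x
      have combo := combo_norm_sq t z x
      have hzx : ‖z - x‖ ^ 2 = ‖z - x‖ ^ 2 := rfl
      nlinarith [hm, hcv, hcw, hcs, combo, ht0, sq_nonneg ‖z - x‖]
    refine le_of_forall_pos_le_add ?_
    intro ε hε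
    set B : ℝ := ρg / 2 * ‖z - x‖ ^ 2 with hB
    have hB0 : 0 ≤ B := by positivity
    set t : ℝ := min 1 (ε / (B + 1)) with htdef
    have ht0 : 0 < t := lt_min one_pos (by positivity)
    have ht1 : t ≤ 1 := min_le_left _ _
    have htB : t * B ≤ ε := by
      have h1 : t ≤ ε / (B + 1) := min_le_right _ _
      have h2 : t * B ≤ (ε / (B + 1)) * B := by
        apply mul_le_mul_of_nonneg_right h1 hB0
      have h3 : (ε / (B + 1)) * B ≤ ε := by
        rw [div_mul_eq_mul_div, div_le_iff₀ (by linarith)]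
        nlinarith
      linarith
    have := keyt t ht0 ht1
    linarith
  -- Step B : gradient inequality for h
  have hb : h x + ⟪h' x, z - x⟫ + ρh / 2 * ‖z - x‖ ^ 2 ≤ h z := by
    have hhconv' : ConvexOn ℝ C (fun u : EuclideanSpace ℝ (Fin n) => h u - ρh / 2 * ⟪u, u⟫) := by
      have : (fun u : EuclideanSpace ℝ (Fin n) => h u - ρh / 2 * ⟪u, u⟫)
          = fun u : EuclideanSpace ℝ (Fin n) => h u - ρh / 2 * ‖u‖ ^ 2 := by
        funext u; rw [real_inner_self_eq_norm_sq]
      rw [this]; exact hhconv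
    have hsq : HasFDerivAt (fun u : EuclideanSpace ℝ (Fin n) => ⟪u, u⟫)
        ((fderivInnerCLM ℝ (x, x)).comp
          ((ContinuousLinearMap.id ℝ (EuclideanSpace ℝ (Fin n))).prod (ContinuousLinearMap.id ℝ (EuclideanSpace ℝ (Fin n))))) x :=
      (hasFDerivAt_id x).inner ℝ (hasFDerivAt_id x)
    have hd : HasFDerivAt (fun u : EuclideanSpace ℝ (Fin n) => h u - ρh / 2 * ⟪u, u⟫)
        ((InnerProductSpace.toDual ℝ (EuclideanSpace ℝ (Fin n)) (h' x)) - (ρh / 2) •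
          ((fderivInnerCLM ℝ (x, x)).comp
            ((ContinuousLinearMap.id ℝ (EuclideanSpace ℝ (Fin n))).prod (ContinuousLinearMap.id ℝ (EuclideanSpace ℝ (Fin n)))))) x :=
      ((hh x).hasFDerivAt).sub (hsq.const_mul (ρh / 2))
    have hg2 := grad_ineq hCcv hhconv' hx hz hd
    simp only [ContinuousLinearMap.sub_apply, ContinuousLinearMap.smul_apply,
      InnerProductSpace.toDual_apply_apply, ContinuousLinearMap.comp_apply,
      ContinuousLinearMap.prod_apply, ContinuousLinearMap.id_apply,
      fderivInnerCLM_apply, smul_eq_mul] at hg2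
    have h1 : ‖z - x‖ ^ 2 = ⟪z, z⟫ - 2 * ⟪z, x⟫ + ⟪x, x⟫ := by
      rw [← real_inner_self_eq_norm_sq]; exact real_inner_sub_sub_self z x
    have h2 : ⟪x, z - x⟫ = ⟪x, z⟫ - ⟪x, x⟫ := inner_sub_right x z x
    have h3 : ⟪z - x, x⟫ = ⟪z, x⟫ - ⟪x, x⟫ := inner_sub_left z x x
    have h4 := real_inner_comm x z
    nlinarith [hg2]
  -- Step C : Cauchy-Schwarz / AM-GM
  have hCS : γ * ⟪x - xm, z - x⟫ ≤ γ / 2 * ‖x - xm‖ ^ 2 + γ / 2 * ‖z - x‖ ^ 2 := by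
    have h1 := real_inner_le_norm (x - xm) (z - x)
    nlinarith [sq_nonneg (‖x - xm‖ - ‖z - x‖), mul_le_mul_of_nonneg_left h1 hγ,
      norm_nonneg (x - xm), norm_nonneg (z - x)]
  have hce : ⟪c, z - x⟫ = ⟪h' x, z - x⟫ + γ * ⟪x - xm, z - x⟫ := by
    rw [hc, inner_add_left, real_inner_smul_left]
  linarith [key, hb, hCS, hce.le, hce.ge]
end

section
/- Let C ⊆ ℝ^n be nonempty, closed and convex, let g, h : ℝ^n → ℝ be differentiable with g ρ_g-convex on C and h ρ_h-convex on C (ρ_g, ρ_h ≥ 0), set f = g − h, and let ᾱ > 0 and γ ∈ [0, (ρ_g + ρ_h)/(1 + (1+ᾱ)²)). Let sequences (x^k)_{k≥0}, (z^k)_{k≥0} in ℝ^n and (α_k)_{k≥0} in ℝ satisfy, with x^{−1} := x^0 and for every k ≥ 0: (a) z^k ∈ C and z^k minimizes u ↦ g(u) − ⟨∇h(x^k) + γ(x^k − x^{k−1}), u⟩ over C; (b) α_k ∈ [0, ᾱ]; (c) x^{k+1} = z^k + α_k(z^k − x^k); (d) x^{k+1} ∈ C; (e) f(x^{k+1}) ≤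 f(z^k). Define E_k := f(x^k) + ((ρ_g + ρ_h − γ)/(2(1+ᾱ)²))·‖x^k − x^{k−1}‖². Then for every k ≥ 1, E_{k+1} ≤ E_k − ((ρ_g + ρ_h − γ(1 + (1+ᾱ)²))/(2(1+ᾱ)²))·‖x^k − x^{k−1}‖². -/
/-!
The subproblem solution `z` minimizes the `ρg`-strongly convex function
`g - ⟪∇h(xᵏ) + γ (xᵏ - xᵏ⁻¹), ·⟫` over `C`, so its value there lies `ρg/2 ‖xᵏ - z‖²` below the
value at `xᵏ`; the tangent inequality of the `ρh`-strongly convex `h` at `xᵏ` bounds `h z` from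
below. With Young's inequality on the inertial term this gives
`f z ≤ f xᵏ - (ρg + ρh - γ)/2 ‖z - xᵏ‖² + γ/2 ‖xᵏ - xᵏ⁻¹‖²`. The line search does not increase
`f`, and `‖xᵏ⁺¹ - xᵏ‖ = (1 + αₖ) ‖z - xᵏ‖ ≤ (1 + ᾱ) ‖z - xᵏ‖` turns the first term into the
energy term.
-/

open Set Filter Topology
open scoped RealInnerProductSpace

namespace StrongConvexOn

variable {E : Type*} [NormedAddCommGroup E] [InnerProductSpace ℝ E] {s : Set E} {m : ℝ}
  {f : E → ℝ} {x y : E}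

lemma le_add_smul_sub (hf : StrongConvexOn s m f) (hx : x ∈ s) (hy : y ∈ s) {t : ℝ}
    (ht₀ : 0 ≤ t) (ht₁ : t ≤ 1) :
    f (x + t • (y - x)) ≤ f x + t * (f y - f x - (1 - t) * (m / 2 * ‖y - x‖ ^ 2)) := by
  have key := hf.2 hx hy (sub_nonneg.2 ht₁) ht₀ (sub_add_cancel 1 t)
  rw [show (1 - t) • x + t • y = x + t • (y - x) by module, norm_sub_rev, smul_eq_mul,
    smul_eq_mul] at key
  linarith

lemma add_le_of_isMinOn (hf : StrongConvexOn s m f) (hmin : IsMinOn f s x) (hx : x ∈ s)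
    (hy : y ∈ s) : f x + m / 2 * ‖y - x‖ ^ 2 ≤ f y := by
  have hlim : Tendsto (fun t : ℝ ↦ (1 - t) * (m / 2 * ‖y - x‖ ^ 2)) (𝓝[>] 0)
      (𝓝 (m / 2 * ‖y - x‖ ^ 2)) := by
    refine tendsto_nhdsWithin_of_tendsto_nhds ?_
    exact (by fun_prop : Continuous fun t : ℝ ↦ (1 - t) * (m / 2 * ‖y - x‖ ^ 2)).tendsto'
      0 _ (by simp)
  suffices ∀ᶠ t in 𝓝[>] (0 : ℝ), (1 - t) * (m / 2 * ‖y - x‖ ^ 2) ≤ f y - f x by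
    linarith [le_of_tendsto hlim this]
  filter_upwards [Ioo_mem_nhdsGT (zero_lt_one' ℝ)] with t ht
  have hseg := hf.le_add_smul_sub hx hy ht.1.le ht.2.le
  have hmin_t : f x ≤ f (x + t • (y - x)) :=
    hmin (hf.1.add_smul_sub_mem hx hy ⟨ht.1.le, ht.2.le⟩)
  have := nonneg_of_mul_nonneg_right
    (by linarith : 0 ≤ t * (f y - f x - (1 - t) * (m / 2 * ‖y - x‖ ^ 2))) ht.1
  linarith

lemma add_inner_add_le_of_hasGradientAt [CompleteSpace E] {p : E} (hf : StrongConvexOn s m f)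
    (hx : x ∈ s) (hy : y ∈ s) (hp : HasGradientAt f p x) :
    f x + ⟪p, y - x⟫ + m / 2 * ‖y - x‖ ^ 2 ≤ f y := by
  have hslope := (hp.hasFDerivAt.hasLineDerivAt (y - x)).tendsto_slope_zero_right
  have hbound : Tendsto (fun t : ℝ ↦ f y - f x - (1 - t) * (m / 2 * ‖y - x‖ ^ 2)) (𝓝[>] 0)
      (𝓝 (f y - f x - m / 2 * ‖y - x‖ ^ 2)) := by
    refine tendsto_nhdsWithin_of_tendsto_nhds ?_
    exact (by fun_prop : Continuous fun t : ℝ ↦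
      f y - f x - (1 - t) * (m / 2 * ‖y - x‖ ^ 2)).tendsto' 0 _ (by simp)
  have := le_of_tendsto_of_tendsto hslope hbound <| by
    filter_upwards [Ioo_mem_nhdsGT (zero_lt_one' ℝ)] with t ht
    have hseg := hf.le_add_smul_sub hx hy ht.1.le ht.2.le
    rw [smul_eq_mul, inv_mul_le_iff₀ ht.1]
    linarith
  simp only [InnerProductSpace.toDual_apply_apply] at this
  linarith

lemma sub_inner (hf : StrongConvexOn s m f) (v : E) :
    StrongConvexOn s m (fun u ↦ f u - ⟪v, u⟫) := by
  rw [strongConvexOn_iff_convex] at hf ⊢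
  refine (hf.sub ((innerₛₗ ℝ v).concaveOn hf.1)).congr fun u _ ↦ ?_
  simp only [Pi.sub_apply, innerₛₗ_apply_apply]
  ring

end StrongConvexOn

section InertialDCA

variable {E : Type*} [NormedAddCommGroup E] [InnerProductSpace ℝ E] [CompleteSpace E]
  {C : Set E} {g h : E → ℝ} {ρg ρh γ : ℝ} {p a b z : E}

lemma inertialDCA_step_le (hγ : 0 ≤ γ) (hg : StrongConvexOn C ρg g)
    (hh : StrongConvexOn C ρh h) (hp : HasGradientAt h p a) (ha : a ∈ C) (hz : z ∈ C)
    (hmin : IsMinOn (fun u ↦ g u - ⟪p + γ • (a - b), u⟫) C z) :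
    g z - h z ≤ g a - h a - (ρg + ρh - γ) / 2 * ‖z - a‖ ^ 2 + γ / 2 * ‖a - b‖ ^ 2 := by
  have hsub := (hg.sub_inner (p + γ • (a - b))).add_le_of_isMinOn hmin hz ha
  have htan := hh.add_inner_add_le_of_hasGradientAt ha hz hp
  have hinner : ⟪p + γ • (a - b), z⟫ - ⟪p + γ • (a - b), a⟫ =
      ⟪p, z - a⟫ + γ * ⟪a - b, z - a⟫ := by
    rw [← inner_sub_right, inner_add_left, real_inner_smul_left]
  have hyoung : ⟪a - b, z - a⟫ ≤ (‖a - b‖ ^ 2 + ‖z - a‖ ^ 2) / 2 :=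
    (real_inner_le_norm _ _).trans (by nlinarith [sq_nonneg (‖a - b‖ - ‖z - a‖)])
  rw [norm_sub_rev] at hsub
  linarith [mul_le_mul_of_nonneg_left hyoung hγ]

end InertialDCA

lemma energy_le_of_extrapolation {E : Type*} [NormedAddCommGroup E] [NormedSpace ℝ E]
    {f : E → ℝ} {a b z : E} {α abar S γ : ℝ} (hγ : 0 ≤ γ)
    (hγS : γ < S / (1 + (1 + abar) ^ 2)) (hα : α ∈ Icc 0 abar)
    (hdec : f (z + α • (z - a)) ≤ f z)
    (hz : f z ≤ f a - (S - γ) / 2 * ‖z - a‖ ^ 2 + γ / 2 * ‖a - b‖ ^ 2) :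
    f (z + α • (z - a)) + (S - γ) / (2 * (1 + abar) ^ 2) * ‖z + α • (z - a) - a‖ ^ 2 ≤
      (f a + (S - γ) / (2 * (1 + abar) ^ 2) * ‖a - b‖ ^ 2) -
        (S - γ * (1 + (1 + abar) ^ 2)) / (2 * (1 + abar) ^ 2) * ‖a - b‖ ^ 2 := by
  obtain ⟨hα₀, hαa⟩ := hα
  have habar : 1 ≤ 1 + abar := by linarith
  have hP : 1 ≤ (1 + abar) ^ 2 := one_le_pow₀ habar
  have hP₀ : (1 + abar) ^ 2 ≠ 0 := pow_ne_zero 2 (by linarith)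
  have hSγ : 0 ≤ S - γ := by
    have := (lt_div_iff₀ (by positivity)).1 hγS
    nlinarith
  have hnorm : ‖z + α • (z - a) - a‖ ^ 2 ≤ (1 + abar) ^ 2 * ‖z - a‖ ^ 2 := by
    rw [show z + α • (z - a) - a = (1 + α) • (z - a) by module, norm_smul, mul_pow,
      Real.norm_of_nonneg (by linarith)]
    gcongr
  have hextra : (S - γ) / (2 * (1 + abar) ^ 2) * ‖z + α • (z - a) - a‖ ^ 2 ≤
      (S - γ) / 2 * ‖z - a‖ ^ 2 :=
    calc _ ≤ (S - γ) / (2 * (1 + abar) ^ 2) * ((1 + abar) ^ 2 * ‖z - a‖ ^ 2) := by gcongr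
      _ = (S - γ) / 2 * ‖z - a‖ ^ 2 := by field_simp
  have hcoeff : (S - γ) / (2 * (1 + abar) ^ 2) * ‖a - b‖ ^ 2 -
      (S - γ * (1 + (1 + abar) ^ 2)) / (2 * (1 + abar) ^ 2) * ‖a - b‖ ^ 2 =
        γ / 2 * ‖a - b‖ ^ 2 := by
    field_simp
    ring
  linarith

/-- `x (k - 1)` uses truncated subtraction on `ℕ`, encoding the convention `x⁻¹ := x⁰`. -/
theorem stmt1_general {n : ℕ} (C : Set (EuclideanSpace ℝ (Fin n)))
    (g h : EuclideanSpace ℝ (Fin n) → ℝ)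
    (h' : EuclideanSpace ℝ (Fin n) → EuclideanSpace ℝ (Fin n))
    (hh : ∀ u, HasGradientAt h (h' u) u)
    (ρg ρh : ℝ)
    (hgconv : ConvexOn ℝ C (fun u => g u - ρg / 2 * ‖u‖ ^ 2))
    (hhconv : ConvexOn ℝ C (fun u => h u - ρh / 2 * ‖u‖ ^ 2))
    (abar γ : ℝ) (hγ0 : 0 ≤ γ) (hγ1 : γ < (ρg + ρh) / (1 + (1 + abar) ^ 2))
    (x z : ℕ → EuclideanSpace ℝ (Fin n)) (α : ℕ → ℝ)
    (hzC : ∀ k, z k ∈ C)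
    (hmin : ∀ k, ∀ u ∈ C,
      g (z k) - ⟪h' (x k) + γ • (x k - x (k - 1)), z k⟫ ≤
        g u - ⟪h' (x k) + γ • (x k - x (k - 1)), u⟫)
    (hα : ∀ k, α k ∈ Set.Icc (0 : ℝ) abar)
    (hupd : ∀ k, x (k + 1) = z k + α k • (z k - x k))
    (hxC : ∀ k, x (k + 1) ∈ C)
    (hdec : ∀ k, g (x (k + 1)) - h (x (k + 1)) ≤ g (z k) - h (z k)) :
    ∀ k ≥ 1,
      (g (x (k + 1)) - h (x (k + 1))) +
          (ρg + ρh - γ) / (2 * (1 + abar) ^ 2) * ‖x (k + 1) - x k‖ ^ 2 ≤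
        ((g (x k) - h (x k)) +
            (ρg + ρh - γ) / (2 * (1 + abar) ^ 2) * ‖x k - x (k - 1)‖ ^ 2) -
          (ρg + ρh - γ * (1 + (1 + abar) ^ 2)) / (2 * (1 + abar) ^ 2) *
            ‖x k - x (k - 1)‖ ^ 2 := by
  intro k hk
  obtain ⟨m, rfl⟩ := Nat.exists_eq_add_of_le' hk
  have hstep := inertialDCA_step_le hγ0 (strongConvexOn_iff_convex.2 hgconv)
    (strongConvexOn_iff_convex.2 hhconv) (hh _) (hxC m) (hzC (m + 1)) (hmin (m + 1))
  have hdec' := hdec (m + 1)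
  rw [hupd (m + 1)] at hdec' ⊢
  exact energy_le_of_extrapolation (f := fun u ↦ g u - h u) hγ0 hγ1 (hα _) hdec' hstep

/-- Sufficient descent property of HDCA-LI (Theorem 2.4, first item).
Here `x (k-1)` uses truncated subtraction on `ℕ`, so `x (0-1) = x 0`, encoding
the convention `x⁻¹ := x⁰`. -/
theorem stmt1 {n : ℕ} (C : Set (EuclideanSpace ℝ (Fin n)))
    (hCne : C.Nonempty) (hCcl : IsClosed C) (hCcv : Convex ℝ C)
    (g h : EuclideanSpace ℝ (Fin n) → ℝ)
    (g' h' : EuclideanSpace ℝ (Fin n) → EuclideanSpace ℝ (Fin n))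
    (hg : ∀ u, HasGradientAt g (g' u) u) (hh : ∀ u, HasGradientAt h (h' u) u)
    (ρg ρh : ℝ) (hρg : 0 ≤ ρg) (hρh : 0 ≤ ρh)
    (hgconv : ConvexOn ℝ C (fun u => g u - ρg / 2 * ‖u‖ ^ 2))
    (hhconv : ConvexOn ℝ C (fun u => h u - ρh / 2 * ‖u‖ ^ 2))
    (abar γ : ℝ) (habar : 0 < abar) (hγ0 : 0 ≤ γ) (hγ1 : γ < (ρg + ρh) / (1 + (1 + abar) ^ 2))
    (x z : ℕ → EuclideanSpace ℝ (Fin n)) (α : ℕ → ℝ)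
    (hzC : ∀ k, z k ∈ C)
    (hmin : ∀ k, ∀ u ∈ C,
      g (z k) - ⟪h' (x k) + γ • (x k - x (k - 1)), z k⟫ ≤
        g u - ⟪h' (x k) + γ • (x k - x (k - 1)), u⟫)
    (hα : ∀ k, α k ∈ Set.Icc (0 : ℝ) abar)
    (hupd : ∀ k, x (k + 1) = z k + α k • (z k - x k))
    (hxC : ∀ k, x (k + 1) ∈ C)
    (hdec : ∀ k, g (x (k + 1)) - h (x (k + 1)) ≤ g (z k) - h (z k)) :
    ∀ k ≥ 1,
      (g (x (k + 1)) - h (x (k + 1))) +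
          (ρg + ρh - γ) / (2 * (1 + abar) ^ 2) * ‖x (k + 1) - x k‖ ^ 2 ≤
        ((g (x k) - h (x k)) +
            (ρg + ρh - γ) / (2 * (1 + abar) ^ 2) * ‖x k - x (k - 1)‖ ^ 2) -
          (ρg + ρh - γ * (1 + (1 + abar) ^ 2)) / (2 * (1 + abar) ^ 2) *
            ‖x k - x (k - 1)‖ ^ 2 :=
  stmt1_general C g h h' hh ρg ρh hgconv hhconv abar γ hγ0 hγ1 x z α hzC hmin hα hupd hxC hdec
end

section
/- Let C ⊆ ℝ^n be nonempty, closed and convex, let g, h : ℝ^n → ℝ be differentiable with g ρ_g-convex on C and h ρ_h-convex on C (ρ_g, ρ_h ≥ 0, ρ_g + ρ_h > 0), set f = g − h, and let ᾱ > 0 and γ ∈ [0, (ρ_g + ρ_h)/(1 + (1+ᾱ)²)). Let sequences (x^k)_{k≥0}, (z^k)_{k≥0} in ℝ^n and (α_k)_{k≥0} in ℝ satisfy, with x^{−1} := x^0 and for every k ≥ 0: (a) z^k ∈ C and z^k minimizes u ↦ g(u) − ⟨∇h(x^k) + γ(x^k − x^{k−1}), u⟩ over C; (b) α_k ∈ [0,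 ᾱ]; (c) x^{k+1} = z^k + α_k(z^k − x^k); (d) x^{k+1} ∈ C; (e) f(x^{k+1}) ≤ f(z^k). If inf{f(u) : u ∈ C} > −∞, then Σ_{k≥1} ‖x^k − x^{k−1}‖² < ∞; in particular ‖x^k − x^{k−1}‖ → 0 and ‖z^k − x^k‖ → 0 as k → ∞. -/
/-!
`V k = f (x (k+1)) + γ/2 ‖x (k+1) - x k‖²` is a Lyapunov function. The gradient inequality for the
ρ_h-convex `h` and the quadratic growth of the ρ_g-convex `g - ⟪v, ·⟫` at its minimiser `z` give
`f z ≤ f x + γ ⟪x - x_prev, z - x⟫ - (ρ_g + ρ_h)/2 ‖z - x‖²`. Young's inequality splits the inertial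
term, the line search gives `f x_next ≤ f z`, and `‖x_next - x‖ = (1 + α) ‖z - x‖`, so
`V (k+1) + δ ‖x (k+2) - x (k+1)‖² ≤ V k` with `δ = (ρ_g + ρ_h - γ) / (2 (1 + ᾱ)²) - γ/2`, which is
positive exactly because `γ < (ρ_g + ρ_h) / (1 + (1 + ᾱ)²)`. As `V` is bounded below, the steps are
square-summable.
-/

open scoped RealInnerProductSpace
open Filter Topology

theorem ConvexOn.le_sub_of_hasFDerivAt {F : Type*} [NormedAddCommGroup F] [NormedSpace ℝ F]
    {C : Set F} {φ : F → ℝ} {φ' : F →L[ℝ] ℝ} {p q : F} (hφ : ConvexOn ℝ C φ)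
    (hp : p ∈ C) (hq : q ∈ C) (hφ' : HasFDerivAt φ φ' p) :
    φ' (q - p) ≤ φ q - φ p := by
  have hderiv : HasDerivAt (φ ∘ AffineMap.lineMap (k := ℝ) p q) (φ' (q - p)) 0 :=
    (by simpa using hφ' : HasFDerivAt φ φ' (AffineMap.lineMap (k := ℝ) p q 0)).comp_hasDerivAt 0
      AffineMap.hasDerivAt_lineMap
  simpa [slope] using (hφ.comp_affineMap (AffineMap.lineMap (k := ℝ) p q)).le_slope_of_hasDerivAt
    (by simpa using hp) (by simpa using hq) zero_lt_one hderiv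

theorem norm_add_smul_sub_sub {F : Type*} [NormedAddCommGroup F] [NormedSpace ℝ F] {a : ℝ}
    (ha : 0 ≤ a) (x z : F) : ‖z + a • (z - x) - x‖ = (1 + a) * ‖z - x‖ := by
  rw [show z + a • (z - x) - x = (1 + a) • (z - x) by module, norm_smul,
    Real.norm_of_nonneg (by linarith)]

theorem summable_of_add_mul_le {V a : ℕ → ℝ} {δ m : ℝ} (hδ : 0 < δ) (ha : ∀ k, 0 ≤ a k)
    (hm : ∀ k, m ≤ V k) (hV : ∀ k, V (k + 1) + δ * a k ≤ V k) : Summable a := by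
  have htelescope : ∀ N, δ * ∑ k ∈ Finset.range N, a k ≤ V 0 - V N := by
    intro N
    induction N with
    | zero => simp
    | succ N ih => rw [Finset.sum_range_succ]; linarith [hV N]
  refine summable_of_sum_range_le ha (c := (V 0 - m) / δ) fun N => ?_
  rw [le_div_iff₀ hδ]
  linarith [htelescope N, hm N]

theorem tendsto_norm_zero_of_summable_sq {F : Type*} [SeminormedAddCommGroup F] {d : ℕ → F}
    (h : Summable fun k => ‖d k‖ ^ 2) : Tendsto (fun k => ‖d k‖) atTop (𝓝 0) := by
  simpa [Real.sqrt_sq (norm_nonneg _)] using h.tendsto_atTop_zero.sqrt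

section RhoConvex

variable {E : Type*} [NormedAddCommGroup E] [InnerProductSpace ℝ E] [CompleteSpace E]

theorem ConvexOn.inner_add_sq_le_sub_of_hasGradientAt {C : Set E} {ψ : E → ℝ} {ρ : ℝ}
    {ψ' p q : E} (hψ : ConvexOn ℝ C (fun u => ψ u - ρ / 2 * ‖u‖ ^ 2)) (hp : p ∈ C) (hq : q ∈ C)
    (hψ' : HasGradientAt ψ ψ' p) :
    ⟪ψ', q - p⟫ + ρ / 2 * ‖q - p‖ ^ 2 ≤ ψ q - ψ p := by
  have hderiv := (hasGradientAt_iff_hasFDerivAt.mp hψ').sub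
    ((hasStrictFDerivAt_norm_sq p).hasFDerivAt.const_mul (ρ / 2))
  have key := hψ.le_sub_of_hasFDerivAt hp hq hderiv
  simp only [sub_apply, smul_apply, InnerProductSpace.toDual_apply_apply, innerSL_apply_apply,
    smul_eq_mul, nsmul_eq_mul, Nat.cast_ofNat] at key
  have hsq : ‖q‖ ^ 2 = ‖p‖ ^ 2 + 2 * ⟪p, q - p⟫ + ‖q - p‖ ^ 2 := by
    simpa using norm_add_sq_real p (q - p)
  rw [hsq] at key
  linarith

theorem IsMinOn.inner_add_sq_le_sub {C : Set E} (hC : Convex ℝ C) {ψ : E → ℝ} {ρ : ℝ}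
    {v ψ' z u : E} (hψ : ConvexOn ℝ C (fun u => ψ u - ρ / 2 * ‖u‖ ^ 2))
    (hψ' : HasGradientAt ψ ψ' z) (hz : z ∈ C) (hu : u ∈ C)
    (hmin : IsMinOn (fun u => ψ u - ⟪v, u⟫) C z) :
    ⟪v, u - z⟫ + ρ / 2 * ‖u - z‖ ^ 2 ≤ ψ u - ψ z := by
  have hderiv := (hasGradientAt_iff_hasFDerivAt.mp hψ').sub (innerSL ℝ v).hasFDerivAt
  have hfirst_order := hmin.localize.hasFDerivWithinAt_nonneg hderiv.hasFDerivWithinAt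
    (sub_mem_posTangentConeAt_of_segment_subset (hC.segment_subset hz hu))
  simp only [sub_apply, InnerProductSpace.toDual_apply_apply, innerSL_apply_apply] at hfirst_order
  linarith [hψ.inner_add_sq_le_sub_of_hasGradientAt hz hu hψ']

theorem sub_le_of_isMinOn_sub_inner {C : Set E} (hC : Convex ℝ C) {g h : E → ℝ} {ρg ρh : ℝ}
    (hgconv : ConvexOn ℝ C (fun u => g u - ρg / 2 * ‖u‖ ^ 2))
    (hhconv : ConvexOn ℝ C (fun u => h u - ρh / 2 * ‖u‖ ^ 2))
    {x z v w e : E} (hx : x ∈ C) (hz : z ∈ C)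
    (hgz : HasGradientAt g v z) (hhx : HasGradientAt h w x)
    (hmin : IsMinOn (fun u => g u - ⟪w + e, u⟫) C z) :
    g z - h z ≤ g x - h x + ⟪e, z - x⟫ - (ρg + ρh) / 2 * ‖z - x‖ ^ 2 := by
  have hg := hmin.inner_add_sq_le_sub hC hgconv hgz hz hx
  have hh := hhconv.inner_add_sq_le_sub_of_hasGradientAt hx hz hhx
  rw [← neg_sub z x, inner_neg_right, norm_neg, inner_add_left] at hg
  linarith

theorem inertial_step_descent {C : Set E} (hC : Convex ℝ C) {g h : E → ℝ} {ρg ρh : ℝ}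
    (hgconv : ConvexOn ℝ C (fun u => g u - ρg / 2 * ‖u‖ ^ 2))
    (hhconv : ConvexOn ℝ C (fun u => h u - ρh / 2 * ‖u‖ ^ 2))
    {γ a abar : ℝ} (hγ0 : 0 ≤ γ) (hγ : γ ≤ ρg + ρh) (ha0 : 0 ≤ a) (ha : a ≤ abar)
    {x₀ x₁ z v w : E} (hx₁ : x₁ ∈ C) (hz : z ∈ C)
    (hgz : HasGradientAt g v z) (hhx : HasGradientAt h w x₁)
    (hmin : IsMinOn (fun u => g u - ⟪w + γ • (x₁ - x₀), u⟫) C z)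
    (hdec : g (z + a • (z - x₁)) - h (z + a • (z - x₁)) ≤ g z - h z) :
    g (z + a • (z - x₁)) - h (z + a • (z - x₁)) +
        (ρg + ρh - γ) / (2 * (1 + abar) ^ 2) * ‖z + a • (z - x₁) - x₁‖ ^ 2 ≤
      g x₁ - h x₁ + γ / 2 * ‖x₁ - x₀‖ ^ 2 := by
  have hdc := sub_le_of_isMinOn_sub_inner hC hgconv hhconv hx₁ hz hgz hhx hmin
  have hyoung : ⟪γ • (x₁ - x₀), z - x₁⟫ ≤ γ / 2 * ‖x₁ - x₀‖ ^ 2 + γ / 2 * ‖z - x₁‖ ^ 2 := by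
    rw [real_inner_smul_left]
    nlinarith [real_inner_le_norm (x₁ - x₀) (z - x₁), two_mul_le_add_sq ‖x₁ - x₀‖ ‖z - x₁‖]
  have hext : ‖z + a • (z - x₁) - x₁‖ ^ 2 ≤ (1 + abar) ^ 2 * ‖z - x₁‖ ^ 2 := by
    rw [norm_add_smul_sub_sub ha0, mul_pow]
    gcongr
  have habar : 0 < 1 + abar := by linarith
  have hpull : (ρg + ρh - γ) / (2 * (1 + abar) ^ 2) * ‖z + a • (z - x₁) - x₁‖ ^ 2 ≤
      (ρg + ρh - γ) / 2 * ‖z - x₁‖ ^ 2 := by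
    calc _ ≤ (ρg + ρh - γ) / (2 * (1 + abar) ^ 2) * ((1 + abar) ^ 2 * ‖z - x₁‖ ^ 2) := by
          gcongr
      _ = (ρg + ρh - γ) / 2 * ‖z - x₁‖ ^ 2 := by field_simp
  linarith

end RhoConvex

theorem stmt2_general {n : ℕ} (C : Set (EuclideanSpace ℝ (Fin n)))
    (hCcv : Convex ℝ C)
    (g h : EuclideanSpace ℝ (Fin n) → ℝ)
    (g' h' : EuclideanSpace ℝ (Fin n) → EuclideanSpace ℝ (Fin n))
    (hg : ∀ u, HasGradientAt g (g' u) u) (hh : ∀ u, HasGradientAt h (h' u) u)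
    (ρg ρh : ℝ)
    (hgconv : ConvexOn ℝ C (fun u => g u - ρg / 2 * ‖u‖ ^ 2))
    (hhconv : ConvexOn ℝ C (fun u => h u - ρh / 2 * ‖u‖ ^ 2))
    (abar γ : ℝ) (habar : 0 < abar) (hγ0 : 0 ≤ γ)
    (hγ1 : γ < (ρg + ρh) / (1 + (1 + abar) ^ 2))
    (x z : ℕ → EuclideanSpace ℝ (Fin n)) (α : ℕ → ℝ)
    (hzC : ∀ k, z k ∈ C)
    (hmin : ∀ k, ∀ u ∈ C,
      g (z k) - ⟪h' (x k) + γ • (x k - x (k - 1)), z k⟫ ≤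
        g u - ⟪h' (x k) + γ • (x k - x (k - 1)), u⟫)
    (hα : ∀ k, α k ∈ Set.Icc (0 : ℝ) abar)
    (hupd : ∀ k, x (k + 1) = z k + α k • (z k - x k))
    (hxC : ∀ k, x (k + 1) ∈ C)
    (hdec : ∀ k, g (x (k + 1)) - h (x (k + 1)) ≤ g (z k) - h (z k))
    (hbdd : ∃ m : ℝ, ∀ u ∈ C, m ≤ g u - h u) :
    Summable (fun k : ℕ => ‖x (k + 1) - x k‖ ^ 2) ∧
      Tendsto (fun k : ℕ => ‖x k - x (k - 1)‖) atTop (𝓝 0) ∧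
      Tendsto (fun k : ℕ => ‖z k - x k‖) atTop (𝓝 0) := by
  obtain ⟨m, hm⟩ := hbdd
  have hγρ : γ * (1 + (1 + abar) ^ 2) < ρg + ρh := (lt_div_iff₀ (by positivity)).mp hγ1
  set δ := (ρg + ρh - γ) / (2 * (1 + abar) ^ 2) - γ / 2
  have hδ : 0 < δ := by
    rw [sub_pos, div_lt_div_iff₀ two_pos (by positivity)]
    nlinarith
  set V : ℕ → ℝ := fun k => g (x (k + 1)) - h (x (k + 1)) + γ / 2 * ‖x (k + 1) - x k‖ ^ 2
  have hdescent : ∀ k, V (k + 1) + δ * ‖x (k + 1 + 1) - x (k + 1)‖ ^ 2 ≤ V k := by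
    intro k
    have hstep := inertial_step_descent (x₀ := x k) hCcv hgconv hhconv hγ0 (by nlinarith)
      (hα (k + 1)).1 (hα (k + 1)).2 (hxC k) (hzC (k + 1)) (hg _) (hh _)
      (isMinOn_iff.mpr (hmin (k + 1))) (hupd (k + 1) ▸ hdec (k + 1))
    rw [← hupd (k + 1)] at hstep
    simp only [V, δ]
    linarith
  have hV : ∀ k, m ≤ V k := fun k => by
    have : 0 ≤ γ / 2 * ‖x (k + 1) - x k‖ ^ 2 := by positivity
    simp only [V]
    linarith [hm _ (hxC k)]
  have hsum : Summable fun k => ‖x (k + 1) - x k‖ ^ 2 :=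
    (summable_nat_add_iff 1).mp (summable_of_add_mul_le hδ (fun _ => by positivity) hV hdescent)
  have hlim := tendsto_norm_zero_of_summable_sq hsum
  refine ⟨hsum, (tendsto_add_atTop_iff_nat 1).mp hlim,
    squeeze_zero (fun _ => norm_nonneg _) (fun k => ?_) hlim⟩
  rw [hupd k, norm_add_smul_sub_sub (hα k).1]
  exact le_mul_of_one_le_left (norm_nonneg _) (by linarith [(hα k).1])

/-- Square-summability of successive steps of HDCA-LI
(Theorem 2.4, second item). `x (k-1)` uses truncated subtraction on `ℕ`,
so `x (0-1) = x 0`, encoding the convention `x⁻¹ := x⁰`. Note that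
`Σ_{k≥1} ‖x^k − x^{k−1}‖² = Σ_{k≥0} ‖x^{k+1} − x^k‖²`. -/
theorem stmt2 {n : ℕ} (C : Set (EuclideanSpace ℝ (Fin n)))
    (hCne : C.Nonempty) (hCcl : IsClosed C) (hCcv : Convex ℝ C)
    (g h : EuclideanSpace ℝ (Fin n) → ℝ)
    (g' h' : EuclideanSpace ℝ (Fin n) → EuclideanSpace ℝ (Fin n))
    (hg : ∀ u, HasGradientAt g (g' u) u) (hh : ∀ u, HasGradientAt h (h' u) u)
    (ρg ρh : ℝ) (hρg : 0 ≤ ρg) (hρh : 0 ≤ ρh) (hρ : 0 < ρg + ρh)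
    (hgconv : ConvexOn ℝ C (fun u => g u - ρg / 2 * ‖u‖ ^ 2))
    (hhconv : ConvexOn ℝ C (fun u => h u - ρh / 2 * ‖u‖ ^ 2))
    (abar γ : ℝ) (habar : 0 < abar) (hγ0 : 0 ≤ γ)
    (hγ1 : γ < (ρg + ρh) / (1 + (1 + abar) ^ 2))
    (x z : ℕ → EuclideanSpace ℝ (Fin n)) (α : ℕ → ℝ)
    (hzC : ∀ k, z k ∈ C)
    (hmin : ∀ k, ∀ u ∈ C,
      g (z k) - ⟪h' (x k) + γ • (x k - x (k - 1)), z k⟫ ≤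
        g u - ⟪h' (x k) + γ • (x k - x (k - 1)), u⟫)
    (hα : ∀ k, α k ∈ Set.Icc (0 : ℝ) abar)
    (hupd : ∀ k, x (k + 1) = z k + α k • (z k - x k))
    (hxC : ∀ k, x (k + 1) ∈ C)
    (hdec : ∀ k, g (x (k + 1)) - h (x (k + 1)) ≤ g (z k) - h (z k))
    (hbdd : ∃ m : ℝ, ∀ u ∈ C, m ≤ g u - h u) :
    Summable (fun k : ℕ => ‖x (k + 1) - x k‖ ^ 2) ∧
      Tendsto (fun k : ℕ => ‖x k - x (k - 1)‖) atTop (𝓝 0) ∧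
      Tendsto (fun k : ℕ => ‖z k - x k‖) atTop (𝓝 0) :=
  stmt2_general C hCcv g h g' h' hg hh ρg ρh hgconv hhconv abar γ habar hγ0 hγ1 x z α hzC hmin hα
    hupd hxC hdec hbdd
end

section
/- Let C ⊆ ℝ^n be nonempty, closed and convex, let g, h : ℝ^n → ℝ be continuously differentiable with g ρ_g-convex on C and h ρ_h-convex on C (ρ_g, ρ_h ≥ 0, ρ_g + ρ_h > 0), set f = g − h, and let ᾱ > 0 and γ ∈ [0, (ρ_g + ρ_h)/(1 + (1+ᾱ)²)). Let sequences (x^k)_{k≥0}, (z^k)_{k≥0} in ℝ^n and (α_k)_{k≥0} in ℝ satisfy, with x^{−1} := x^0 and for every k ≥ 0: (a) z^k ∈ C and z^k minimizes u ↦ g(u) − ⟨∇h(x^k) + γ(x^k − x^{k−1}), u⟩ over C; (b) α_k ∈ [0, ᾱ]; (c) x^{k+1} = z^k + α_k(z^k − x^k); (d) x^{k+1} ∈ C; (e) f(x^{k+1}) ≤ f(z^k). Suppose in addition that inf{f(u) : u ∈ C} > −∞ and that the sequence (x^k) is bounded. Then every cluster point x* of (x^k) lies in C and satisfies ⟨∇h(x*)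 − ∇g(x*), u − x*⟩ ≤ 0 for all u ∈ C, i.e. x* is a critical point of the problem min{f(u) : u ∈ C}. -/
/-!
Strong convexity of `g` at the subproblem minimizer `z^k` and of `h` at `x^k` give
`f(z^k) ≤ f(x^k) + γ/2 ‖x^k - x^{k-1}‖² - (ρg + ρh - γ)/2 ‖z^k - x^k‖²`, the inertial cross term
being absorbed by Young's inequality. Since `‖x^{k+1} - x^k‖ ≤ (1 + ᾱ) ‖z^k - x^k‖` and the line
search does not increase `f`, the merit function `f(x^{k+1}) + γ/2 ‖x^{k+1} - x^k‖²` drops by at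
least `(ρg + ρh - γ(1 + (1 + ᾱ)²))/2 · ‖z^{k+1} - x^{k+1}‖²` per step. It is bounded below, so
`z^k - x^k → 0` and `x^{k+1} - x^k → 0`. Along a subsequence converging to `x*` the subproblem
minimality passes to the limit: `x*` minimizes `g - ⟪∇h(x*), ·⟫` on `C`, and the first-order
condition of that convex problem is criticality.
-/

open scoped RealInnerProductSpace
open Filter Topology

section ConvexAnalysis

variable {E : Type*} [NormedAddCommGroup E] [InnerProductSpace ℝ E] [CompleteSpace E]
  {s : Set E} {f : E → ℝ} {m : ℝ} {p v x z u : E}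

theorem HasGradientAt.sub_inner (hf : HasGradientAt f p x) (v : E) :
    HasGradientAt (fun u => f u - ⟪v, u⟫) (p - v) x := by
  rw [hasGradientAt_iff_hasFDerivAt, map_sub]
  exact hf.hasFDerivAt.sub (innerSL ℝ v).hasFDerivAt

theorem IsMinOn.inner_gradient_nonneg (hs : Convex ℝ s) (hmin : IsMinOn f s z)
    (hf : HasGradientAt f p z) (hz : z ∈ s) (hu : u ∈ s) : 0 ≤ ⟪p, u - z⟫ := by
  simpa using hmin.localize.hasFDerivWithinAt_nonneg hf.hasFDerivAt.hasFDerivWithinAt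
    (sub_mem_posTangentConeAt_of_segment_subset (hs.segment_subset hz hu))

theorem StrongConvexOn.add_inner_add_le (hf : StrongConvexOn s m f) (hfx : HasGradientAt f p x)
    (hx : x ∈ s) (hu : u ∈ s) : f x + ⟪p, u - x⟫ + m / 2 * ‖u - x‖ ^ 2 ≤ f u := by
  have hslope : Tendsto (fun t : ℝ => t⁻¹ * (f (x + t • (u - x)) - f x)) (𝓝[>] 0)
      (𝓝 ⟪p, u - x⟫) := by
    simpa using (hfx.hasFDerivAt.hasLineDerivAt (u - x)).tendsto_slope_zero_right
  have hbound : Tendsto (fun t : ℝ => f u - f x - (1 - t) * (m / 2 * ‖u - x‖ ^ 2)) (𝓝[>] 0)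
      (𝓝 (f u - f x - m / 2 * ‖u - x‖ ^ 2)) := by
    refine tendsto_nhdsWithin_of_tendsto_nhds ?_
    have hcont : Continuous fun t : ℝ => f u - f x - (1 - t) * (m / 2 * ‖u - x‖ ^ 2) := by
      fun_prop
    simpa using hcont.tendsto 0
  have hslope_le : ∀ᶠ t in 𝓝[>] (0 : ℝ), t⁻¹ * (f (x + t • (u - x)) - f x)
      ≤ f u - f x - (1 - t) * (m / 2 * ‖u - x‖ ^ 2) := by
    filter_upwards [Ioc_mem_nhdsGT one_pos] with t ⟨ht0, ht1⟩
    have hconv := hf.2 hx hu (sub_nonneg.2 ht1) ht0.le (sub_add_cancel 1 t)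
    rw [show (1 - t) • x + t • u = x + t • (u - x) by module, norm_sub_rev, smul_eq_mul,
      smul_eq_mul] at hconv
    rw [inv_mul_le_iff₀ ht0]
    nlinarith
  linarith [le_of_tendsto_of_tendsto hslope hbound hslope_le]

theorem StrongConvexOn.add_inner_add_le_of_isMinOn (hf : StrongConvexOn s m f)
    (hfz : HasGradientAt f p z) (hz : z ∈ s) (hmin : IsMinOn (fun u => f u - ⟪v, u⟫) s z)
    (hu : u ∈ s) : f z + ⟪v, u - z⟫ + m / 2 * ‖u - z‖ ^ 2 ≤ f u := by
  have hfirst := hmin.inner_gradient_nonneg hf.1 (hfz.sub_inner v) hz hu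
  rw [inner_sub_left] at hfirst
  linarith [hf.add_inner_add_le hfz hz hu]

end ConvexAnalysis

theorem norm_extrapolate_sub_le {E : Type*} [NormedAddCommGroup E] [NormedSpace ℝ E] {x z : E}
    {a abar : ℝ} (ha : a ∈ Set.Icc 0 abar) :
    ‖z + a • (z - x) - x‖ ≤ (1 + abar) * ‖z - x‖ := by
  rw [show z + a • (z - x) - x = (1 + a) • (z - x) by module, norm_smul,
    Real.norm_of_nonneg (by linarith [ha.1])]
  gcongr
  exact ha.2

theorem tendsto_zero_of_add_mul_le_of_bddBelow {L d : ℕ → ℝ} {c : ℝ} (hc : 0 < c)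
    (hd : ∀ k, 0 ≤ d k) (hL : ∀ k, L (k + 1) + c * d k ≤ L k) (hbdd : BddBelow (Set.range L)) :
    Tendsto d atTop (𝓝 0) := by
  have hlim := tendsto_atTop_ciInf
    (antitone_nat_of_succ_le fun k => by linarith [hL k, mul_nonneg hc.le (hd k)]) hbdd
  refine squeeze_zero hd (fun k => (le_div_iff₀' hc).2 (le_sub_iff_add_le'.2 (hL k))) ?_
  simpa using (hlim.sub (hlim.comp (tendsto_add_atTop_nat 1))).div_const c

theorem mem_and_isMinOn_of_mapClusterPt {E : Type*} [NormedAddCommGroup E]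
    [InnerProductSpace ℝ E] {C : Set E} {g : E → ℝ} {h' : E → E} {x z e : ℕ → E}
    (hCcl : IsClosed C) (hgc : Continuous g) (hh' : Continuous h')
    (hzx : Tendsto (fun k => z k - x k) atTop (𝓝 0))
    (he : Tendsto e atTop (𝓝 0)) (hzC : ∀ k, z k ∈ C)
    (hmin : ∀ k, IsMinOn (fun u => g u - ⟪h' (x k) + e k, u⟫) C (z k))
    {xs : E} (hxs : MapClusterPt xs atTop x) :
    xs ∈ C ∧ IsMinOn (fun u => g u - ⟪h' xs, u⟫) C xs := by
  obtain ⟨ψ, hψ, hxψ⟩ := hxs.tendsto_subseq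
  have hzψ : Tendsto (fun k => z (ψ k)) atTop (𝓝 xs) := by
    simpa using hxψ.add (hzx.comp hψ.tendsto_atTop)
  have hvψ : Tendsto (fun k => h' (x (ψ k)) + e (ψ k)) atTop (𝓝 (h' xs)) := by
    simpa using ((hh'.tendsto xs).comp hxψ).add (he.comp hψ.tendsto_atTop)
  refine ⟨hCcl.mem_of_tendsto hzψ (Eventually.of_forall fun k => hzC (ψ k)),
    isMinOn_iff.2 fun u hu => ?_⟩
  exact le_of_tendsto_of_tendsto' (((hgc.tendsto xs).comp hzψ).sub (hvψ.inner hzψ))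
    (tendsto_const_nhds.sub (hvψ.inner tendsto_const_nhds))
    fun k => isMinOn_iff.1 (hmin (ψ k)) u hu

section HDCA

variable {E : Type*} [NormedAddCommGroup E] [InnerProductSpace ℝ E] [CompleteSpace E]
  {C : Set E} {g h : E → ℝ} {g' h' : E → E} {ρg ρh γ abar : ℝ}

theorem inertial_dca_descent (hgC : StrongConvexOn C ρg g) (hhC : StrongConvexOn C ρh h)
    {x y z p q : E} (hgz : HasGradientAt g p z) (hhx : HasGradientAt h q x) (hγ : 0 ≤ γ)
    (hx : x ∈ C) (hz : z ∈ C) (hmin : IsMinOn (fun u => g u - ⟪q + γ • (x - y), u⟫) C z) :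
    g z - h z ≤ g x - h x + γ / 2 * ‖x - y‖ ^ 2 - (ρg + ρh - γ) / 2 * ‖z - x‖ ^ 2 := by
  have hg := hgC.add_inner_add_le_of_isMinOn hgz hz hmin hx
  have hh := hhC.add_inner_add_le hhx hx hz
  have hyoung : ⟪x - y, z - x⟫ ≤ (‖x - y‖ ^ 2 + ‖z - x‖ ^ 2) / 2 := by
    nlinarith [real_inner_le_norm (x - y) (z - x), sq_nonneg (‖x - y‖ - ‖z - x‖)]
  have hcross : ⟪q + γ • (x - y), x - z⟫ + ⟪q, z - x⟫ = -(γ * ⟪x - y, z - x⟫) := by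
    rw [← neg_sub z x, inner_neg_right, inner_add_left, real_inner_smul_left]; ring
  rw [norm_sub_rev x z] at hg
  nlinarith [mul_le_mul_of_nonneg_left hyoung hγ]

noncomputable def hdcaMerit (g h : E → ℝ) (γ : ℝ) (x : ℕ → E) (k : ℕ) : ℝ :=
  g (x (k + 1)) - h (x (k + 1)) + γ / 2 * ‖x (k + 1) - x k‖ ^ 2

variable {x z : ℕ → E} {α : ℕ → ℝ}

theorem hdcaMerit_succ_add_le (hgC : StrongConvexOn C ρg g) (hhC : StrongConvexOn C ρh h)
    (hg : ∀ u, HasGradientAt g (g' u) u) (hh : ∀ u, HasGradientAt h (h' u) u) (hγ0 : 0 ≤ γ)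
    (hzC : ∀ k, z k ∈ C)
    (hmin : ∀ k, IsMinOn (fun u => g u - ⟪h' (x k) + γ • (x k - x (k - 1)), u⟫) C (z k))
    (hα : ∀ k, α k ∈ Set.Icc 0 abar) (hupd : ∀ k, x (k + 1) = z k + α k • (z k - x k))
    (hxC : ∀ k, x (k + 1) ∈ C) (hdec : ∀ k, g (x (k + 1)) - h (x (k + 1)) ≤ g (z k) - h (z k))
    (k : ℕ) :
    hdcaMerit g h γ x (k + 1)
        + (ρg + ρh - γ * (1 + (1 + abar) ^ 2)) / 2 * ‖z (k + 1) - x (k + 1)‖ ^ 2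
      ≤ hdcaMerit g h γ x k := by
  have hstep := inertial_dca_descent hgC hhC (hg _) (hh _) hγ0 (hxC k) (hzC (k + 1))
    (hmin (k + 1))
  rw [Nat.add_sub_cancel] at hstep
  have hext : ‖x (k + 1 + 1) - x (k + 1)‖ ^ 2 ≤ (1 + abar) ^ 2 * ‖z (k + 1) - x (k + 1)‖ ^ 2 := by
    rw [← mul_pow, hupd (k + 1)]
    exact pow_le_pow_left₀ (norm_nonneg _) (norm_extrapolate_sub_le (hα (k + 1))) 2
  unfold hdcaMerit
  nlinarith [hdec (k + 1), mul_le_mul_of_nonneg_left hext hγ0]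

theorem hdca_tendsto_sub_zero (hgC : StrongConvexOn C ρg g) (hhC : StrongConvexOn C ρh h)
    (hg : ∀ u, HasGradientAt g (g' u) u) (hh : ∀ u, HasGradientAt h (h' u) u) (hγ0 : 0 ≤ γ)
    (hγ1 : γ < (ρg + ρh) / (1 + (1 + abar) ^ 2)) (hzC : ∀ k, z k ∈ C)
    (hmin : ∀ k, IsMinOn (fun u => g u - ⟪h' (x k) + γ • (x k - x (k - 1)), u⟫) C (z k))
    (hα : ∀ k, α k ∈ Set.Icc 0 abar) (hupd : ∀ k, x (k + 1) = z k + α k • (z k - x k))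
    (hxC : ∀ k, x (k + 1) ∈ C) (hdec : ∀ k, g (x (k + 1)) - h (x (k + 1)) ≤ g (z k) - h (z k))
    (hbdd : ∃ m : ℝ, ∀ u ∈ C, m ≤ g u - h u) :
    Tendsto (fun k => z k - x k) atTop (𝓝 0) := by
  obtain ⟨m, hm⟩ := hbdd
  have hc : 0 < (ρg + ρh - γ * (1 + (1 + abar) ^ 2)) / 2 := by
    have := (lt_div_iff₀ (by positivity)).1 hγ1
    linarith
  have hmerit_bdd : BddBelow (Set.range (hdcaMerit g h γ x)) := by
    refine ⟨m, ?_⟩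
    rintro _ ⟨k, rfl⟩
    have := hm _ (hxC k)
    unfold hdcaMerit
    nlinarith [sq_nonneg ‖x (k + 1) - x k‖]
  have hsq := tendsto_zero_of_add_mul_le_of_bddBelow hc (fun k => by positivity)
    (hdcaMerit_succ_add_le hgC hhC hg hh hγ0 hzC hmin hα hupd hxC hdec) hmerit_bdd
  rw [← tendsto_add_atTop_iff_nat 1, tendsto_zero_iff_norm_tendsto_zero]
  simpa [Real.sqrt_sq (norm_nonneg _)] using hsq.sqrt

end HDCA

/-- `x (k - 1)` uses truncated subtraction on `ℕ`, so `x (0 - 1) = x 0` encodes the convention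
`x⁻¹ := x⁰`. -/
theorem stmt3_general {n : ℕ} (C : Set (EuclideanSpace ℝ (Fin n)))
    (hCcl : IsClosed C) (hCcv : Convex ℝ C)
    (g h : EuclideanSpace ℝ (Fin n) → ℝ)
    (g' h' : EuclideanSpace ℝ (Fin n) → EuclideanSpace ℝ (Fin n))
    (hg : ∀ u, HasGradientAt g (g' u) u) (hh : ∀ u, HasGradientAt h (h' u) u)
    (hh' : Continuous h')
    (ρg ρh : ℝ)
    (hgconv : ConvexOn ℝ C (fun u => g u - ρg / 2 * ‖u‖ ^ 2))
    (hhconv : ConvexOn ℝ C (fun u => h u - ρh / 2 * ‖u‖ ^ 2))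
    (abar γ : ℝ) (hγ0 : 0 ≤ γ)
    (hγ1 : γ < (ρg + ρh) / (1 + (1 + abar) ^ 2))
    (x z : ℕ → EuclideanSpace ℝ (Fin n)) (α : ℕ → ℝ)
    (hzC : ∀ k, z k ∈ C)
    (hmin : ∀ k, ∀ u ∈ C,
      g (z k) - ⟪h' (x k) + γ • (x k - x (k - 1)), z k⟫ ≤
        g u - ⟪h' (x k) + γ • (x k - x (k - 1)), u⟫)
    (hα : ∀ k, α k ∈ Set.Icc (0 : ℝ) abar)
    (hupd : ∀ k, x (k + 1) = z k + α k • (z k - x k))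
    (hxC : ∀ k, x (k + 1) ∈ C)
    (hdec : ∀ k, g (x (k + 1)) - h (x (k + 1)) ≤ g (z k) - h (z k))
    (hbdd : ∃ m : ℝ, ∀ u ∈ C, m ≤ g u - h u) :
    ∀ xs : EuclideanSpace ℝ (Fin n), MapClusterPt xs atTop x →
      xs ∈ C ∧ ∀ u ∈ C, ⟪h' xs - g' xs, u - xs⟫ ≤ 0 := by
  intro xs hxs
  have hmin' (k : ℕ) : IsMinOn (fun u => g u - ⟪h' (x k) + γ • (x k - x (k - 1)), u⟫) C (z k) :=
    isMinOn_iff.2 (hmin k)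
  have hzx := hdca_tendsto_sub_zero (strongConvexOn_iff_convex.2 hgconv)
    (strongConvexOn_iff_convex.2 hhconv) hg hh hγ0 hγ1 hzC hmin' hα hupd hxC hdec hbdd
  have hinertia : Tendsto (fun k => γ • (x k - x (k - 1))) atTop (𝓝 0) := by
    rw [← tendsto_add_atTop_iff_nat 1]
    have hstep : Tendsto (fun k => x (k + 1) - x k) atTop (𝓝 0) :=
      squeeze_zero_norm (fun k => hupd k ▸ norm_extrapolate_sub_le (hα k))
        (by simpa using (tendsto_norm_zero.comp hzx).const_mul (1 + abar))
    simpa using hstep.const_smul γ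
  obtain ⟨hxsC, hxsmin⟩ := mem_and_isMinOn_of_mapClusterPt hCcl
    (continuous_iff_continuousAt.2 fun u => (hg u).continuousAt) hh' hzx hinertia hzC hmin' hxs
  refine ⟨hxsC, fun u hu => ?_⟩
  have hfirst := hxsmin.inner_gradient_nonneg hCcv ((hg xs).sub_inner (h' xs)) hxsC hu
  rwa [← neg_sub, inner_neg_left, neg_nonpos]

/-- Subsequential convergence of HDCA-LI to critical points
(Theorem 2.4, third item). `x (k-1)` uses truncated subtraction on `ℕ`,
so `x (0-1) = x 0`, encoding the convention `x⁻¹ := x⁰`. -/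
theorem stmt3 {n : ℕ} (C : Set (EuclideanSpace ℝ (Fin n)))
    (hCne : C.Nonempty) (hCcl : IsClosed C) (hCcv : Convex ℝ C)
    (g h : EuclideanSpace ℝ (Fin n) → ℝ)
    (g' h' : EuclideanSpace ℝ (Fin n) → EuclideanSpace ℝ (Fin n))
    (hg : ∀ u, HasGradientAt g (g' u) u) (hh : ∀ u, HasGradientAt h (h' u) u)
    (hg' : Continuous g') (hh' : Continuous h')
    (ρg ρh : ℝ) (hρg : 0 ≤ ρg) (hρh : 0 ≤ ρh) (hρ : 0 < ρg + ρh)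
    (hgconv : ConvexOn ℝ C (fun u => g u - ρg / 2 * ‖u‖ ^ 2))
    (hhconv : ConvexOn ℝ C (fun u => h u - ρh / 2 * ‖u‖ ^ 2))
    (abar γ : ℝ) (habar : 0 < abar) (hγ0 : 0 ≤ γ)
    (hγ1 : γ < (ρg + ρh) / (1 + (1 + abar) ^ 2))
    (x z : ℕ → EuclideanSpace ℝ (Fin n)) (α : ℕ → ℝ)
    (hzC : ∀ k, z k ∈ C)
    (hmin : ∀ k, ∀ u ∈ C,
      g (z k) - ⟪h' (x k) + γ • (x k - x (k - 1)), z k⟫ ≤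
        g u - ⟪h' (x k) + γ • (x k - x (k - 1)), u⟫)
    (hα : ∀ k, α k ∈ Set.Icc (0 : ℝ) abar)
    (hupd : ∀ k, x (k + 1) = z k + α k • (z k - x k))
    (hxC : ∀ k, x (k + 1) ∈ C)
    (hdec : ∀ k, g (x (k + 1)) - h (x (k + 1)) ≤ g (z k) - h (z k))
    (hbdd : ∃ m : ℝ, ∀ u ∈ C, m ≤ g u - h u)
    (hxbdd : ∃ M : ℝ, ∀ k, ‖x k‖ ≤ M) :
    ∀ xs : EuclideanSpace ℝ (Fin n), MapClusterPt xs atTop x →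
      xs ∈ C ∧ ∀ u ∈ C, ⟪h' xs - g' xs, u - xs⟫ ≤ 0 :=
  stmt3_general C hCcl hCcv g h g' h' hg hh hh' ρg ρh hgconv hhconv abar γ hγ0 hγ1 x z α hzC hmin hα
    hupd hxC hdec hbdd
end

section
/- Let C ⊆ ℝ^n be nonempty, closed and convex, let g, h : ℝ^n → ℝ be differentiable with g ρ_g-convex on C and h ρ_h-convex on C (ρ_g, ρ_h ≥ 0), and set f = g − h. Let γ ≥ 0, let v ∈ C and x, x⁻ ∈ ℝ^n, and suppose x⁺ ∈ C minimizes u ↦ g(u) − ⟨∇h(v) + γ(x − x⁻), u⟩ over C. Then f(x⁺) + ((ρ_g + ρ_h − γ)/2)·‖v − x⁺‖² ≤ f(v) + (γ/2)·‖x − x⁻‖². -/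
open scoped RealInnerProductSpace
open Set Filter Topology AffineMap

/-!
Write `f = g - h`. The `ρ_h`-convexity of `h` gives the gradient inequality
`h x⁺ ≥ h v + ⟪∇h v, x⁺ - v⟫ + ρ_h/2 ‖x⁺ - v‖²`, while the subproblem objective
`u ↦ g u - ⟪∇h v + γ (x - x⁻), u⟫` is `ρ_g`-strongly convex on `C`, so it grows at least
quadratically, with modulus `ρ_g/2`, away from its minimizer `x⁺`. Adding the two estimates leaves
the cross term `γ ⟪x - x⁻, x⁺ - v⟫`, which Young's inequality bounds by
`γ/2 ‖x - x⁻‖² + γ/2 ‖x⁺ - v‖²`.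
-/

namespace StrongConvexOn

variable {E : Type*} [NormedAddCommGroup E] [NormedSpace ℝ E] {s : Set E} {m : ℝ} {f : E → ℝ}
  {x y : E}

lemma slope_lineMap_add_le (hf : StrongConvexOn s m f) (hx : x ∈ s) (hy : y ∈ s) {t : ℝ}
    (ht : t ∈ Ioc 0 1) :
    slope (fun τ ↦ f (lineMap x y τ)) 0 t + m / 2 * (1 - t) * ‖x - y‖ ^ 2 ≤ f y - f x := by
  obtain ⟨ht0, ht1⟩ := ht
  have hconv := hf.2 hx hy (sub_nonneg.2 ht1) ht0.le (sub_add_cancel 1 t)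
  rw [← lineMap_apply_module, smul_eq_mul, smul_eq_mul] at hconv
  rw [slope_def_field, lineMap_apply_zero, sub_zero, ← le_sub_iff_add_le, div_le_iff₀ ht0]
  nlinarith

lemma add_sq_le_of_isMinOn (hf : StrongConvexOn s m f) (hx : x ∈ s) (hy : y ∈ s)
    (hmin : IsMinOn f s x) : f x + m / 2 * ‖x - y‖ ^ 2 ≤ f y := by
  have hbound : ∀ t ∈ Ioc (0 : ℝ) 1, m / 2 * (1 - t) * ‖x - y‖ ^ 2 ≤ f y - f x := by
    intro t ht
    have hslope : 0 ≤ slope (fun τ ↦ f (lineMap x y τ)) 0 t := by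
      rw [slope_def_field, lineMap_apply_zero, sub_zero]
      exact div_nonneg (sub_nonneg.2 (isMinOn_iff.1 hmin _
        (hf.1.lineMap_mem hx hy ⟨ht.1.le, ht.2⟩))) ht.1.le
    linarith [hf.slope_lineMap_add_le hx hy ht]
  have hlim : Tendsto (fun t : ℝ ↦ m / 2 * (1 - t) * ‖x - y‖ ^ 2) (𝓝[>] 0)
      (𝓝 (m / 2 * ‖x - y‖ ^ 2)) := by
    refine (Continuous.tendsto' (by fun_prop) 0 _ ?_).mono_left nhdsWithin_le_nhds
    simp
  linarith [le_of_tendsto hlim (eventually_of_mem (Ioc_mem_nhdsGT zero_lt_one) hbound)]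

lemma add_fderiv_add_sq_le (hf : StrongConvexOn s m f) (hx : x ∈ s) (hy : y ∈ s)
    {f' : E →L[ℝ] ℝ} (hf' : HasFDerivAt f f' x) :
    f x + f' (y - x) + m / 2 * ‖x - y‖ ^ 2 ≤ f y := by
  have hline : HasDerivAt (fun τ : ℝ ↦ f (lineMap x y τ)) (f' (y - x)) 0 := by
    have hf'0 : HasFDerivAt f f' (lineMap x y (0 : ℝ)) := by rwa [lineMap_apply_zero]
    exact hf'0.comp_hasDerivAt (0 : ℝ) hasDerivAt_lineMap
  have hlim : Tendsto (fun t ↦ slope (fun τ ↦ f (lineMap x y τ)) 0 t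
      + m / 2 * (1 - t) * ‖x - y‖ ^ 2) (𝓝[>] 0) (𝓝 (f' (y - x) + m / 2 * ‖x - y‖ ^ 2)) := by
    refine ((hasDerivAt_iff_tendsto_slope.1 hline).mono_left
      (nhdsWithin_mono _ fun t ht ↦ ne_of_gt ht)).add ?_
    refine (Continuous.tendsto' (by fun_prop) 0 _ ?_).mono_left nhdsWithin_le_nhds
    simp
  linarith [le_of_tendsto hlim (eventually_of_mem (Ioc_mem_nhdsGT zero_lt_one)
    fun t ht ↦ hf.slope_lineMap_add_le hx hy ht)]

end StrongConvexOn

theorem stmt4_general {n : ℕ} (C : Set (EuclideanSpace ℝ (Fin n)))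
    (g h : EuclideanSpace ℝ (Fin n) → ℝ)
    (h' : EuclideanSpace ℝ (Fin n) → EuclideanSpace ℝ (Fin n))
    (hh : ∀ u, HasGradientAt h (h' u) u)
    (ρg ρh : ℝ)
    (hgconv : ConvexOn ℝ C (fun u => g u - ρg / 2 * ‖u‖ ^ 2))
    (hhconv : ConvexOn ℝ C (fun u => h u - ρh / 2 * ‖u‖ ^ 2))
    (γ : ℝ) (hγ : 0 ≤ γ)
    (v x xm xp : EuclideanSpace ℝ (Fin n)) (hv : v ∈ C) (hxp : xp ∈ C)
    (hmin : ∀ u ∈ C,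
      g xp - ⟪h' v + γ • (x - xm), xp⟫ ≤ g u - ⟪h' v + γ • (x - xm), u⟫) :
    (g xp - h xp) + (ρg + ρh - γ) / 2 * ‖v - xp‖ ^ 2 ≤
      (g v - h v) + γ / 2 * ‖x - xm‖ ^ 2 := by
  set w := h' v + γ • (x - xm)
  have hobj : StrongConvexOn C ρg (fun u ↦ g u - ⟪w, u⟫) := by
    have hsub := (strongConvexOn_iff_convex.2 hgconv).sub
      (uniformConcaveOn_zero.2 ((innerₛₗ ℝ w).concaveOn hgconv.1))
    rw [add_zero] at hsub
    exact hsub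
  have hgrowth := hobj.add_sq_le_of_isMinOn hxp hv (isMinOn_iff.2 hmin)
  have hgrad := (strongConvexOn_iff_convex.2 hhconv).add_fderiv_add_sq_le hv hxp
    (hh v).hasFDerivAt
  have hyoung : γ * ⟪x - xm, xp - v⟫ ≤ γ / 2 * ‖x - xm‖ ^ 2 + γ / 2 * ‖xp - v‖ ^ 2 := by
    nlinarith [norm_sub_sq_real (x - xm) (xp - v), mul_nonneg hγ (sq_nonneg ‖x - xm - (xp - v)‖)]
  simp only [InnerProductSpace.toDual_apply_apply, w, inner_add_left, real_inner_smul_left,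
    inner_sub_right] at hgrad hgrowth hyoung
  rw [norm_sub_rev xp v] at hgrowth hyoung
  linarith

/-- One-step descent estimate for the HDCA-NI subproblem. -/
theorem stmt4 {n : ℕ} (C : Set (EuclideanSpace ℝ (Fin n)))
    (hCne : C.Nonempty) (hCcl : IsClosed C) (hCcv : Convex ℝ C)
    (g h : EuclideanSpace ℝ (Fin n) → ℝ)
    (g' h' : EuclideanSpace ℝ (Fin n) → EuclideanSpace ℝ (Fin n))
    (hg : ∀ u, HasGradientAt g (g' u) u) (hh : ∀ u, HasGradientAt h (h' u) u)
    (ρg ρh : ℝ) (hρg : 0 ≤ ρg) (hρh : 0 ≤ ρh)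
    (hgconv : ConvexOn ℝ C (fun u => g u - ρg / 2 * ‖u‖ ^ 2))
    (hhconv : ConvexOn ℝ C (fun u => h u - ρh / 2 * ‖u‖ ^ 2))
    (γ : ℝ) (hγ : 0 ≤ γ)
    (v x xm xp : EuclideanSpace ℝ (Fin n)) (hv : v ∈ C) (hxp : xp ∈ C)
    (hmin : ∀ u ∈ C,
      g xp - ⟪h' v + γ • (x - xm), xp⟫ ≤ g u - ⟪h' v + γ • (x - xm), u⟫) :
    (g xp - h xp) + (ρg + ρh - γ) / 2 * ‖v - xp‖ ^ 2 ≤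
      (g v - h v) + γ / 2 * ‖x - xm‖ ^ 2 :=
  stmt4_general C g h h' hh ρg ρh hgconv hhconv γ hγ v x xm xp hv hxp hmin
end

section
/- Let A, B be real n×n positive definite matrices (i.e. u^⊤Au > 0 and u^⊤Bu > 0 for every nonzero u ∈ ℝ^n; symmetry is not assumed). Let (x̄, ȳ, w̄) be a global optimal solution with zero optimal value of the problem min{ ‖y‖² + x^⊤w − (x^⊤y)²/‖x‖² : (x, y, w) ∈ C₃ }, where C₃ = { (x, y, w) ∈ ℝ₊^n × ℝ₊^n × ℝ₊^n : w = Bx − Ay, e^⊤x = 1 }. Then ȳ ≠ 0 and the pair (x̄, ‖x̄‖/‖ȳ‖) is a solution of the asymmetric eigenvalue complementarity problem AEiCP(A,B). -/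
/-!
A zero value of the merit function `‖y‖² + xᵀw − (xᵀy)²/‖x‖²` forces both of its nonnegative
parts to vanish: `xᵀw = 0`, and equality holds in Cauchy–Schwarz, so `y = μ x` with `μ ≥ 0`.
Positive definiteness of `B` rules out `y = 0` (it would give `xᵀBx = xᵀw = 0`), so `μ > 0`.
Then `w = Bx − μAx`, i.e. `μ⁻¹Bx − Ax = μ⁻¹w ≥ 0` is complementary to `x`, and
`μ⁻¹ = ‖x‖/‖y‖`.
-/

open Matrix

/-- A pair `(x, lam)` solves the (asymmetric) eigenvalue complementarity problem
EiCP(A,B): `x ≥ 0`, `x ≠ 0`, `w := lam·Bx − Ax ≥ 0` and `xᵀw = 0`. -/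
def IsEiCPSol {n : ℕ} (A B : Matrix (Fin n) (Fin n) ℝ) (x : Fin n → ℝ) (lam : ℝ) :
    Prop :=
  (∀ i, 0 ≤ x i) ∧ x ≠ 0 ∧ (∀ i, 0 ≤ (lam • (B *ᵥ x) - A *ᵥ x) i) ∧
    x ⬝ᵥ (lam • (B *ᵥ x) - A *ᵥ x) = 0

section DotProduct

variable {ι R : Type*} [Fintype ι]

lemma dotProduct_self_smul_sub_smul [CommRing R] (x y : ι → R) :
    ((x ⬝ᵥ y) • x - (x ⬝ᵥ x) • y) ⬝ᵥ ((x ⬝ᵥ y) • x - (x ⬝ᵥ x) • y) =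
      (x ⬝ᵥ x) * ((x ⬝ᵥ x) * (y ⬝ᵥ y) - (x ⬝ᵥ y) ^ 2) := by
  simp only [dotProduct_sub, sub_dotProduct, dotProduct_smul, smul_dotProduct, smul_eq_mul,
    dotProduct_comm y x]
  ring

variable [Field R] [LinearOrder R] [IsStrictOrderedRing R]

lemma dotProduct_self_nonneg (v : ι → R) : 0 ≤ v ⬝ᵥ v :=
  Finset.sum_nonneg fun i _ => mul_self_nonneg (v i)

lemma dotProduct_self_pos {v : ι → R} (hv : v ≠ 0) : 0 < v ⬝ᵥ v :=
  (dotProduct_self_nonneg v).lt_of_ne (Ne.symm (mt dotProduct_self_eq_zero.mp hv))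

lemma sq_dotProduct_le (x y : ι → R) : (x ⬝ᵥ y) ^ 2 ≤ (x ⬝ᵥ x) * (y ⬝ᵥ y) := by
  rcases eq_or_ne x 0 with rfl | hx
  · simp
  have h := dotProduct_self_smul_sub_smul x y ▸
    dotProduct_self_nonneg ((x ⬝ᵥ y) • x - (x ⬝ᵥ x) • y)
  linarith [nonneg_of_mul_nonneg_right h (dotProduct_self_pos hx)]

lemma eq_smul_of_sq_dotProduct_eq {x y : ι → R} (hx : x ≠ 0)
    (h : (x ⬝ᵥ y) ^ 2 = (x ⬝ᵥ x) * (y ⬝ᵥ y)) : y = ((x ⬝ᵥ y) / (x ⬝ᵥ x)) • x := by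
  have hs := (dotProduct_self_pos hx).ne'
  have hu : (x ⬝ᵥ y) • x - (x ⬝ᵥ x) • y = 0 := by
    rw [← dotProduct_self_eq_zero, dotProduct_self_smul_sub_smul, h, sub_self, mul_zero]
  rw [sub_eq_zero, eq_comm] at hu
  calc y = (x ⬝ᵥ x)⁻¹ • ((x ⬝ᵥ x) • y) := (inv_smul_smul₀ hs y).symm
    _ = ((x ⬝ᵥ y) / (x ⬝ᵥ x)) • x := by rw [hu, smul_smul, div_eq_inv_mul]

def eicpObjective (x y w : ι → R) : R :=
  y ⬝ᵥ y + x ⬝ᵥ w - (x ⬝ᵥ y) ^ 2 / (x ⬝ᵥ x)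

lemma eicpObjective_eq_zero_iff {x y w : ι → R} (hx : x ≠ 0) (hxw : 0 ≤ x ⬝ᵥ w) :
    eicpObjective x y w = 0 ↔ x ⬝ᵥ w = 0 ∧ (x ⬝ᵥ y) ^ 2 = (x ⬝ᵥ x) * (y ⬝ᵥ y) := by
  have hs := dotProduct_self_pos hx
  have hcs : (x ⬝ᵥ y) ^ 2 / (x ⬝ᵥ x) ≤ y ⬝ᵥ y := by
    rw [div_le_iff₀ hs, mul_comm]
    exact sq_dotProduct_le x y
  rw [eicpObjective]
  constructor
  · intro h
    have hxw0 : x ⬝ᵥ w = 0 := by linarith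
    have hyy : (x ⬝ᵥ y) ^ 2 / (x ⬝ᵥ x) = y ⬝ᵥ y := by linarith
    rw [div_eq_iff hs.ne', mul_comm] at hyy
    exact ⟨hxw0, hyy⟩
  · rintro ⟨hxw, h⟩
    rw [hxw, h, mul_div_cancel_left₀ _ hs.ne']
    ring

end DotProduct

lemma isEiCPSol_inv_of_eq_smul {n : ℕ} {A B : Matrix (Fin n) (Fin n) ℝ} {x w : Fin n → ℝ}
    {μ : ℝ} (hx : 0 ≤ x) (hx0 : x ≠ 0) (hμ : 0 < μ) (hw : 0 ≤ w)
    (hwdef : w = B *ᵥ x - A *ᵥ (μ • x)) (hxw : x ⬝ᵥ w = 0) : IsEiCPSol A B x μ⁻¹ := by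
  have hres : μ⁻¹ • (B *ᵥ x) - A *ᵥ x = μ⁻¹ • w := by
    rw [hwdef, mulVec_smul, smul_sub, inv_smul_smul₀ hμ.ne']
  refine ⟨hx, hx0, ?_, ?_⟩
  · rw [hres]
    exact smul_nonneg (inv_nonneg.mpr hμ.le) hw
  · rw [hres, dotProduct_smul, hxw, smul_zero]

lemma sqrt_dotProduct_self_div_sqrt_smul {ι : Type*} [Fintype ι] {x : ι → ℝ} {μ : ℝ}
    (hx : x ≠ 0) (hμ : 0 < μ) :
    Real.sqrt (x ⬝ᵥ x) / Real.sqrt ((μ • x) ⬝ᵥ (μ • x)) = μ⁻¹ := by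
  have hs := Real.sqrt_pos.mpr (dotProduct_self_pos hx)
  rw [dotProduct_smul, smul_dotProduct, smul_eq_mul, smul_eq_mul, ← mul_assoc, ← sq,
    Real.sqrt_mul (sq_nonneg μ), Real.sqrt_sq hμ.le, div_mul_cancel_right₀ hs.ne']

theorem stmt11_general {n : ℕ} (A B : Matrix (Fin n) (Fin n) ℝ)
    (hB : ∀ u : Fin n → ℝ, u ≠ 0 → 0 < u ⬝ᵥ (B *ᵥ u))
    (xb yb wb : Fin n → ℝ)
    (hxb : ∀ i, 0 ≤ xb i) (hyb : ∀ i, 0 ≤ yb i) (hwb : ∀ i, 0 ≤ wb i)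
    (hwdef : wb = B *ᵥ xb - A *ᵥ yb) (hsum : ∑ i, xb i = 1)
    (hzero : yb ⬝ᵥ yb + xb ⬝ᵥ wb - (xb ⬝ᵥ yb) ^ 2 / (xb ⬝ᵥ xb) = 0) :
    yb ≠ 0 ∧
      IsEiCPSol A B xb (Real.sqrt (xb ⬝ᵥ xb) / Real.sqrt (yb ⬝ᵥ yb)) := by
  have hx0 : xb ≠ 0 := by
    rintro rfl
    simp at hsum
  obtain ⟨hxw, hcs⟩ :=
    (eicpObjective_eq_zero_iff hx0 (dotProduct_nonneg_of_nonneg hxb hwb)).mp hzero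
  have hy0 : yb ≠ 0 := by
    rintro rfl
    rw [mulVec_zero, sub_zero] at hwdef
    exact (hB xb hx0).ne' (hwdef ▸ hxw)
  set μ := (xb ⬝ᵥ yb) / (xb ⬝ᵥ xb)
  have hy : yb = μ • xb := eq_smul_of_sq_dotProduct_eq hx0 hcs
  have hμ : 0 < μ := by
    have hμ_nonneg : 0 ≤ μ :=
      div_nonneg (dotProduct_nonneg_of_nonneg hxb hyb) (dotProduct_self_nonneg xb)
    refine hμ_nonneg.lt_of_ne fun hμ0 => ?_
    exact hy0 (by rw [hy, show μ = 0 from hμ0.symm, zero_smul])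
  refine ⟨hy0, ?_⟩
  rw [hy] at hwdef ⊢
  rw [sqrt_dotProduct_self_div_sqrt_smul hx0 hμ]
  exact isEiCPSol_inv_of_eq_smul hxb hx0 hμ hwb hwdef hxw

/-- (Theorem 3.1) A zero-value global solution of (NLP3)
yields a solution `(x̄, ‖x̄‖/‖ȳ‖)` of AEiCP(A,B). Here `‖u‖² = u ⬝ᵥ u`. -/
theorem stmt11 {n : ℕ} (A B : Matrix (Fin n) (Fin n) ℝ)
    (hA : ∀ u : Fin n → ℝ, u ≠ 0 → 0 < u ⬝ᵥ (A *ᵥ u))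
    (hB : ∀ u : Fin n → ℝ, u ≠ 0 → 0 < u ⬝ᵥ (B *ᵥ u))
    (xb yb wb : Fin n → ℝ)
    (hxb : ∀ i, 0 ≤ xb i) (hyb : ∀ i, 0 ≤ yb i) (hwb : ∀ i, 0 ≤ wb i)
    (hwdef : wb = B *ᵥ xb - A *ᵥ yb) (hsum : ∑ i, xb i = 1)
    (hzero : yb ⬝ᵥ yb + xb ⬝ᵥ wb - (xb ⬝ᵥ yb) ^ 2 / (xb ⬝ᵥ xb) = 0)
    (hopt : ∀ x y w : Fin n → ℝ, (∀ i, 0 ≤ x i) → (∀ i, 0 ≤ y i) →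
      (∀ i, 0 ≤ w i) → w = B *ᵥ x - A *ᵥ y → ∑ i, x i = 1 →
      0 ≤ y ⬝ᵥ y + x ⬝ᵥ w - (x ⬝ᵥ y) ^ 2 / (x ⬝ᵥ x)) :
    yb ≠ 0 ∧
      IsEiCPSol A B xb (Real.sqrt (xb ⬝ᵥ xb) / Real.sqrt (yb ⬝ᵥ yb)) :=
  stmt11_general A B hB xb yb wb hxb hyb hwb hwdef hsum hzero
end

section
/- Let A, B be real n×n matrices and let D := { (x, y) ∈ ℝ^n × ℝ^n : x ≥ 0, y ≥ 0, e^⊤x = 1, Bx − Ay ≥ 0 }. Let M ∈ ℝ be such that e^⊤y ≤ M for every (x, y) ∈ D. Then for every η ≥ 3.2 + 20 n M², the function (x, y) ↦ (η/2)(‖x‖² + ‖y‖²) + (x^⊤y)²/‖x‖² is convex on D; consequently, (x^⊤y)²/‖x‖² is, on D, the difference of the two convex functions (η/2)(‖x‖² + ‖y‖²) + (x^⊤y)²/‖x‖² and (η/2)(‖x‖² + ‖y‖²). -/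
set_option maxHeartbeats 1000000


open Matrix

private lemma dotSelf_nonneg {n : ℕ} (v : Fin n → ℝ) : 0 ≤ v ⬝ᵥ v :=
  Finset.sum_nonneg fun _ _ => mul_self_nonneg _

/-- Two-point convexity inequality for the quadratic
`(x,y) ↦ η/2 (‖x‖²+‖y‖²) + 2u x·y − u² ‖x‖²`. -/
private lemma quad_convex_ineq {n : ℕ} (η u t s : ℝ) (a b x y : Fin n → ℝ)
    (hc : 0 < η - 2 * u ^ 2) (hcη : 4 * u ^ 2 ≤ (η - 2 * u ^ 2) * η)
    (ht : 0 ≤ t) (hs : 0 ≤ s) (hts : t + s = 1) :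
    η / 2 * ((t • a + s • x) ⬝ᵥ (t • a + s • x) + (t • b + s • y) ⬝ᵥ (t • b + s • y)) +
      2 * u * ((t • a + s • x) ⬝ᵥ (t • b + s • y)) -
      u ^ 2 * ((t • a + s • x) ⬝ᵥ (t • a + s • x))
    ≤ t * (η / 2 * (a ⬝ᵥ a + b ⬝ᵥ b) + 2 * u * (a ⬝ᵥ b) - u ^ 2 * (a ⬝ᵥ a)) +
      s * (η / 2 * (x ⬝ᵥ x + y ⬝ᵥ y) + 2 * u * (x ⬝ᵥ y) - u ^ 2 * (x ⬝ᵥ x)) := by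
  have hs1 : s = 1 - t := by linarith
  subst hs1
  set m : Fin n → ℝ := (η - 2 * u ^ 2) • (a - x) + (2 * u) • (b - y) with hm
  have hmm : 0 ≤ m ⬝ᵥ m := dotSelf_nonneg m
  have hww : 0 ≤ (b - y) ⬝ᵥ (b - y) := dotSelf_nonneg _
  have hcne : η - 2 * u ^ 2 ≠ 0 := ne_of_gt hc
  have key : t * (η / 2 * (a ⬝ᵥ a + b ⬝ᵥ b) + 2 * u * (a ⬝ᵥ b) - u ^ 2 * (a ⬝ᵥ a)) +
      (1 - t) * (η / 2 * (x ⬝ᵥ x + y ⬝ᵥ y) + 2 * u * (x ⬝ᵥ y) - u ^ 2 * (x ⬝ᵥ x)) -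
      (η / 2 * ((t • a + (1 - t) • x) ⬝ᵥ (t • a + (1 - t) • x) +
          (t • b + (1 - t) • y) ⬝ᵥ (t • b + (1 - t) • y)) +
        2 * u * ((t • a + (1 - t) • x) ⬝ᵥ (t • b + (1 - t) • y)) -
        u ^ 2 * ((t • a + (1 - t) • x) ⬝ᵥ (t • a + (1 - t) • x)))
      = (t * (1 - t) * (m ⬝ᵥ m) +
          t * (1 - t) * ((η - 2 * u ^ 2) * η - 4 * u ^ 2) * ((b - y) ⬝ᵥ (b - y))) /
        (2 * (η - 2 * u ^ 2)) := by
    rw [eq_div_iff (by positivity)]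
    simp only [hm, add_dotProduct, dotProduct_add, smul_dotProduct, dotProduct_smul,
      sub_dotProduct, dotProduct_sub, smul_eq_mul, dotProduct_comm x a, dotProduct_comm y b,
      dotProduct_comm b a, dotProduct_comm y x, dotProduct_comm y a, dotProduct_comm b x]
    ring
  have h1 : 0 ≤ t * (1 - t) := mul_nonneg ht (by linarith)
  have hX : 0 ≤ (t * (1 - t) * (m ⬝ᵥ m) +
      t * (1 - t) * ((η - 2 * u ^ 2) * η - 4 * u ^ 2) * ((b - y) ⬝ᵥ (b - y))) /
      (2 * (η - 2 * u ^ 2)) := by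
    apply div_nonneg _ (by linarith)
    have h2 : 0 ≤ t * (1 - t) * ((η - 2 * u ^ 2) * η - 4 * u ^ 2) :=
      mul_nonneg h1 (by linarith)
    exact add_nonneg (mul_nonneg h1 hmm) (mul_nonneg h2 hww)
  linarith [key]

/-- Two-point convexity inequality for `(x,y) ↦ η/2 (‖x‖²+‖y‖²)`. -/
private lemma quad2_convex_ineq {n : ℕ} (η t s : ℝ) (a b x y : Fin n → ℝ)
    (hη : 0 ≤ η) (ht : 0 ≤ t) (hs : 0 ≤ s) (hts : t + s = 1) :
    η / 2 * ((t • a + s • x) ⬝ᵥ (t • a + s • x) + (t • b + s • y) ⬝ᵥ (t • b + s • y))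
    ≤ t * (η / 2 * (a ⬝ᵥ a + b ⬝ᵥ b)) + s * (η / 2 * (x ⬝ᵥ x + y ⬝ᵥ y)) := by
  have hs1 : s = 1 - t := by linarith
  subst hs1
  have hvv : 0 ≤ (a - x) ⬝ᵥ (a - x) := dotSelf_nonneg _
  have hww : 0 ≤ (b - y) ⬝ᵥ (b - y) := dotSelf_nonneg _
  have h1 : 0 ≤ t * (1 - t) := mul_nonneg ht (by linarith)
  have key : t * (η / 2 * (a ⬝ᵥ a + b ⬝ᵥ b)) + (1 - t) * (η / 2 * (x ⬝ᵥ x + y ⬝ᵥ y)) -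
      η / 2 * ((t • a + (1 - t) • x) ⬝ᵥ (t • a + (1 - t) • x) +
        (t • b + (1 - t) • y) ⬝ᵥ (t • b + (1 - t) • y))
      = t * (1 - t) * (η / 2) * ((a - x) ⬝ᵥ (a - x) + (b - y) ⬝ᵥ (b - y)) := by
    simp only [add_dotProduct, dotProduct_add, smul_dotProduct, dotProduct_smul,
      sub_dotProduct, dotProduct_sub, smul_eq_mul, dotProduct_comm x a, dotProduct_comm y b]
    ring
  nlinarith [mul_nonneg (mul_nonneg h1 (by linarith : (0:ℝ) ≤ η / 2)) (add_nonneg hvv hww)]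

private lemma sq_div_eq (S d : ℝ) (hd : d ≠ 0) :
    S ^ 2 / d = 2 * (S / d) * S - (S / d) ^ 2 * d := by
  field_simp
  ring

/-- (Proposition 3.2) DC decomposition of
`(xᵀy)²/‖x‖²` on the feasible set `D`. Here `‖u‖² = u ⬝ᵥ u`. -/
theorem stmt12 {n : ℕ} (A B : Matrix (Fin n) (Fin n) ℝ) (M η : ℝ)
    (D : Set ((Fin n → ℝ) × (Fin n → ℝ)))
    (hD : D = { p : (Fin n → ℝ) × (Fin n → ℝ) |
      (∀ i, 0 ≤ p.1 i) ∧ (∀ i, 0 ≤ p.2 i) ∧ (∑ i, p.1 i) = 1 ∧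
      ∀ i, 0 ≤ (B *ᵥ p.1 - A *ᵥ p.2) i })
    (hM : ∀ p ∈ D, ∑ i, p.2 i ≤ M)
    (hη : (3.2 : ℝ) + 20 * n * M ^ 2 ≤ η) :
    ConvexOn ℝ D (fun p => η / 2 * (p.1 ⬝ᵥ p.1 + p.2 ⬝ᵥ p.2) +
        (p.1 ⬝ᵥ p.2) ^ 2 / (p.1 ⬝ᵥ p.1)) ∧
    ConvexOn ℝ D (fun p => η / 2 * (p.1 ⬝ᵥ p.1 + p.2 ⬝ᵥ p.2)) ∧
    ∀ p ∈ D, (p.1 ⬝ᵥ p.2) ^ 2 / (p.1 ⬝ᵥ p.1) =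
      (η / 2 * (p.1 ⬝ᵥ p.1 + p.2 ⬝ᵥ p.2) + (p.1 ⬝ᵥ p.2) ^ 2 / (p.1 ⬝ᵥ p.1)) -
        η / 2 * (p.1 ⬝ᵥ p.1 + p.2 ⬝ᵥ p.2) := by
  have hnM : 0 ≤ 20 * (n : ℝ) * M ^ 2 := by positivity
  have hη0 : 0 < η := by linarith
  -- convexity of the feasible set
  have hDconv : Convex ℝ D := by
    subst hD
    intro p hp q hq t s ht hs hts
    obtain ⟨hp1, hp2, hp3, hp4⟩ := hp
    obtain ⟨hq1, hq2, hq3, hq4⟩ := hq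
    refine ⟨fun i => ?_, fun i => ?_, ?_, fun i => ?_⟩
    · simp only [Prod.fst_add, Prod.smul_fst, Pi.add_apply, Pi.smul_apply, smul_eq_mul]
      exact add_nonneg (mul_nonneg ht (hp1 i)) (mul_nonneg hs (hq1 i))
    · simp only [Prod.snd_add, Prod.smul_snd, Pi.add_apply, Pi.smul_apply, smul_eq_mul]
      exact add_nonneg (mul_nonneg ht (hp2 i)) (mul_nonneg hs (hq2 i))
    · simp only [Prod.fst_add, Prod.smul_fst, Pi.add_apply, Pi.smul_apply, smul_eq_mul]
      rw [Finset.sum_add_distrib, ← Finset.mul_sum, ← Finset.mul_sum, hp3, hq3]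
      linarith
    · have h1 : (0:ℝ) ≤ (B *ᵥ p.1) i - (A *ᵥ p.2) i := hp4 i
      have h2 : (0:ℝ) ≤ (B *ᵥ q.1) i - (A *ᵥ q.2) i := hq4 i
      simp only [Prod.fst_add, Prod.smul_fst, Prod.snd_add, Prod.smul_snd,
        mulVec_add, mulVec_smul, Pi.sub_apply, Pi.add_apply, Pi.smul_apply, smul_eq_mul]
      nlinarith [mul_nonneg ht h1, mul_nonneg hs h2]
  -- basic facts valid at every point of D
  have facts : ∀ w ∈ D, 0 < w.1 ⬝ᵥ w.1 ∧ 1 ≤ (n : ℝ) * (w.1 ⬝ᵥ w.1) ∧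
      w.2 ⬝ᵥ w.2 ≤ M ^ 2 ∧ 0 ≤ w.1 ⬝ᵥ w.2 ∧
      (w.1 ⬝ᵥ w.2) ^ 2 ≤ (w.1 ⬝ᵥ w.1) * (w.2 ⬝ᵥ w.2) := by
    intro w hw
    have hM' := hM w hw
    rw [hD] at hw
    obtain ⟨hw1, hw2, hw3, _⟩ := hw
    have hd11 : w.1 ⬝ᵥ w.1 = ∑ i, (w.1 i) ^ 2 := by
      simp [dotProduct, sq]
    have hd22 : w.2 ⬝ᵥ w.2 = ∑ i, (w.2 i) ^ 2 := by
      simp [dotProduct, sq]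
    have hcard : 1 ≤ (n : ℝ) * (w.1 ⬝ᵥ w.1) := by
      have := sq_sum_le_card_mul_sum_sq (s := Finset.univ) (f := w.1)
      rw [hw3] at this
      simpa [hd11] using this
    have hpos : 0 < w.1 ⬝ᵥ w.1 := by
      have hnn : (0:ℝ) ≤ (n : ℝ) := Nat.cast_nonneg n
      nlinarith [dotSelf_nonneg w.1]
    have hysum : 0 ≤ ∑ i, w.2 i := Finset.sum_nonneg fun i _ => hw2 i
    have hy2 : w.2 ⬝ᵥ w.2 ≤ M ^ 2 := by
      have h1 : ∑ i, (w.2 i) ^ 2 ≤ (∑ i, w.2 i) ^ 2 :=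
        Finset.sum_sq_le_sq_sum_of_nonneg fun i _ => hw2 i
      have h2 : (∑ i, w.2 i) ^ 2 ≤ M ^ 2 := by nlinarith
      rw [hd22]; linarith
    have hxy : 0 ≤ w.1 ⬝ᵥ w.2 :=
      Finset.sum_nonneg fun i _ => mul_nonneg (hw1 i) (hw2 i)
    have hcs : (w.1 ⬝ᵥ w.2) ^ 2 ≤ (w.1 ⬝ᵥ w.1) * (w.2 ⬝ᵥ w.2) := by
      have := Finset.sum_mul_sq_le_sq_mul_sq Finset.univ w.1 w.2
      rw [hd11, hd22]
      simpa [dotProduct] using this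
    exact ⟨hpos, hcard, hy2, hxy, hcs⟩
  refine ⟨?_, ⟨hDconv, ?_⟩, ?_⟩
  · -- main convexity
    refine ⟨hDconv, ?_⟩
    intro p hp q hq t s ht hs hts
    have hz := hDconv hp hq ht hs hts
    obtain ⟨hapos, -, -, hab0, habcs⟩ := facts p hp
    obtain ⟨hxpos, -, -, hxy0, hxycs⟩ := facts q hq
    obtain ⟨hzpos, hzcard, hzy2, hz0, hzcs⟩ := facts _ hz
    simp only [Prod.fst_add, Prod.smul_fst, Prod.snd_add, Prod.smul_snd]
      at hzpos hzcard hzy2 hz0 hzcs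
    simp only [smul_eq_mul, Prod.fst_add, Prod.smul_fst, Prod.snd_add, Prod.smul_snd]
    clear hz hp hq facts hM hD hDconv
    obtain ⟨u, hu⟩ : ∃ u : ℝ, u = ((t • p.1 + s • q.1) ⬝ᵥ (t • p.2 + s • q.2)) /
        ((t • p.1 + s • q.1) ⬝ᵥ (t • p.1 + s • q.1)) := ⟨_, rfl⟩
    have hu0 : 0 ≤ u := hu ▸ div_nonneg hz0 hzpos.le
    have hu2 : u ^ 2 ≤ (n : ℝ) * M ^ 2 := by
      have h1 : u ^ 2 * ((t • p.1 + s • q.1) ⬝ᵥ (t • p.1 + s • q.1)) ≤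
          (t • p.2 + s • q.2) ⬝ᵥ (t • p.2 + s • q.2) := by
        rw [hu, div_pow, div_mul_eq_mul_div, div_le_iff₀ (pow_pos hzpos 2)]
        linarith [mul_le_mul_of_nonneg_right hzcs hzpos.le]
      have hnn : (0:ℝ) ≤ (n : ℝ) := Nat.cast_nonneg n
      have e1 : u ^ 2 ≤ u ^ 2 * ((n:ℝ) * ((t • p.1 + s • q.1) ⬝ᵥ (t • p.1 + s • q.1))) := by
        nlinarith [sq_nonneg u, hzcard]
      have e2 := mul_le_mul_of_nonneg_left h1 hnn
      have e3 := mul_le_mul_of_nonneg_left hzy2 hnn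
      nlinarith [e1, e2, e3]
    have hc : 0 < η - 2 * u ^ 2 := by linarith
    have hcη : 4 * u ^ 2 ≤ (η - 2 * u ^ 2) * η := by
      have hA : 0 ≤ (η - 2 * u ^ 2 - 3.2 - 18 * ((n:ℝ) * M ^ 2)) * η :=
        mul_nonneg (by linarith) hη0.le
      have hB : 0 ≤ ((n:ℝ) * M ^ 2) * (η - 3.2) :=
        mul_nonneg (by positivity) (by linarith)
      linarith [hA, hB, hu2, hnM, hη0.le]
    -- the quadratic minorant agrees with f at z
    have hne := ne_of_gt hzpos
    have heq : (((t • p.1 + s • q.1) ⬝ᵥ (t • p.2 + s • q.2))) ^ 2 /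
        ((t • p.1 + s • q.1) ⬝ᵥ (t • p.1 + s • q.1)) =
        2 * u * ((t • p.1 + s • q.1) ⬝ᵥ (t • p.2 + s • q.2)) -
        u ^ 2 * ((t • p.1 + s • q.1) ⬝ᵥ (t • p.1 + s • q.1)) := by
      rw [hu]
      exact sq_div_eq _ _ hne
    rw [heq]
    -- the quadratic minorant is below f at p and q
    have hlp : 2 * u * (p.1 ⬝ᵥ p.2) - u ^ 2 * (p.1 ⬝ᵥ p.1) ≤
        (p.1 ⬝ᵥ p.2) ^ 2 / (p.1 ⬝ᵥ p.1) := by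
      rw [le_div_iff₀ hapos]
      nlinarith [sq_nonneg (p.1 ⬝ᵥ p.2 - u * (p.1 ⬝ᵥ p.1))]
    have hlq : 2 * u * (q.1 ⬝ᵥ q.2) - u ^ 2 * (q.1 ⬝ᵥ q.1) ≤
        (q.1 ⬝ᵥ q.2) ^ 2 / (q.1 ⬝ᵥ q.1) := by
      rw [le_div_iff₀ hxpos]
      nlinarith [sq_nonneg (q.1 ⬝ᵥ q.2 - u * (q.1 ⬝ᵥ q.1))]
    have hmain := quad_convex_ineq η u t s p.1 p.2 q.1 q.2 hc hcη ht hs hts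
    linarith [hmain, mul_le_mul_of_nonneg_left hlp ht, mul_le_mul_of_nonneg_left hlq hs]
  · -- convexity of the quadratic part
    intro p hp q hq t s ht hs hts
    simp only [smul_eq_mul, Prod.fst_add, Prod.smul_fst, Prod.snd_add, Prod.smul_snd]
    exact quad2_convex_ineq η t s p.1 p.2 q.1 q.2 (le_of_lt hη0) ht hs hts
  · intro p _
    ring
end

section
/- Let x, y ∈ ℝ^n with x ≠ 0, and define the symmetric n×n matrix H := (2/‖x‖²)·yy^⊤ + (8(x^⊤y)²/‖x‖⁶)·xx^⊤ − (2(x^⊤y)²/‖x‖⁴)·I − (4(x^⊤y)/‖x‖⁴)·(xy^⊤ + yx^⊤), where I is the n×n identity matrix. Then the operator (spectral) norm of H satisfies ‖H‖ ≤ 20‖y‖²/‖x‖². -/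
/-! Each of the four terms of `H` is a scalar multiple of a rank-one matrix `uvᵀ`, whose operator
norm is `‖u‖‖v‖`, or of the identity. The triangle inequality together with Cauchy–Schwarz
`|xᵀy| ≤ ‖x‖‖y‖` bounds the terms by `2`, `8`, `2` and `8` times `‖y‖²/‖x‖²`. -/

open Matrix WithLp
open scoped Matrix.Norms.L2Operator

namespace Matrix

variable {𝕜 m n : Type*} [RCLike 𝕜] [Fintype m] [Fintype n] [DecidableEq n]

lemma l2_opNorm_vecMulVec (u : m → 𝕜) (v : n → 𝕜) :
    ‖vecMulVec u v‖ = ‖toLp 2 u‖ * ‖toLp 2 v‖ := by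
  have h := InnerProductSpace.symm_toEuclideanLin_rankOne (toLp 2 u) (toLp 2 (star v))
  simp only [star_star] at h
  rw [l2_opNorm_def, ← h, ← LinearMap.coe_toContinuousLinearMap_symm, LinearEquiv.trans_apply,
    LinearEquiv.apply_symm_apply, LinearEquiv.apply_symm_apply, InnerProductSpace.norm_rankOne]
  simp [EuclideanSpace.norm_eq]

lemma l2_opNorm_one_le : ‖(1 : Matrix n n 𝕜)‖ ≤ 1 := by
  rw [← l2_opNorm_toEuclideanCLM, map_one]
  exact ContinuousLinearMap.norm_id_le

end Matrix

lemma dotProduct_self_eq_norm_toLp_sq {n : Type*} [Fintype n] (u : n → ℝ) :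
    u ⬝ᵥ u = ‖toLp 2 u‖ ^ 2 := by
  rw [← real_inner_self_eq_norm_sq, EuclideanSpace.inner_toLp_toLp, star_trivial]

lemma abs_dotProduct_le_norm_toLp_mul {n : Type*} [Fintype n] (u v : n → ℝ) :
    |u ⬝ᵥ v| ≤ ‖toLp 2 u‖ * ‖toLp 2 v‖ := by
  simpa [EuclideanSpace.inner_toLp_toLp, dotProduct_comm] using
    abs_real_inner_le_norm (toLp 2 u) (toLp 2 v)

/-- Operator norm bound on the `x`–`x` block of the Hessian of
`φ(x,y) = (xᵀy)²/‖x‖²`. Here `‖u‖² = u ⬝ᵥ u` for vectors, and the matrix norm is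
the operator norm induced by the Euclidean norm, via `Matrix.toEuclideanCLM`. -/
theorem stmt14 {n : ℕ} (x y : Fin n → ℝ) (hx : x ≠ 0)
    (H : Matrix (Fin n) (Fin n) ℝ)
    (hH : H = (2 / (x ⬝ᵥ x)) • vecMulVec y y
      + (8 * (x ⬝ᵥ y) ^ 2 / (x ⬝ᵥ x) ^ 3) • vecMulVec x x
      - (2 * (x ⬝ᵥ y) ^ 2 / (x ⬝ᵥ x) ^ 2) • (1 : Matrix (Fin n) (Fin n) ℝ)
      - (4 * (x ⬝ᵥ y) / (x ⬝ᵥ x) ^ 2) • (vecMulVec x y + vecMulVec y x)) :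
    ‖Matrix.toEuclideanCLM (𝕜 := ℝ) H‖ ≤ 20 * (y ⬝ᵥ y) / (x ⬝ᵥ x) := by
  rw [dotProduct_self_eq_norm_toLp_sq x] at hH ⊢
  rw [l2_opNorm_toEuclideanCLM, dotProduct_self_eq_norm_toLp_sq y]
  have hp : 0 < ‖toLp 2 x‖ := norm_pos_iff.2 (by simpa using hx)
  have hs := abs_dotProduct_le_norm_toLp_mul x y
  set p := ‖toLp 2 x‖
  set q := ‖toLp 2 y‖
  set s := x ⬝ᵥ y
  have hsq : s ^ 2 ≤ (p * q) ^ 2 := sq_le_sq' (neg_le_of_abs_le hs) (le_of_abs_le hs)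
  have h1 : s ^ 2 / p ^ 4 ≤ q ^ 2 / p ^ 2 := by
    rw [div_le_div_iff₀ (by positivity) (by positivity)]; nlinarith
  have h2 : |s| * (p * q) / p ^ 4 ≤ q ^ 2 / p ^ 2 := by
    rw [div_le_div_iff₀ (by positivity) (by positivity)]
    nlinarith [mul_le_mul_of_nonneg_right hs (by positivity : 0 ≤ p * q * p ^ 2)]
  calc ‖H‖ ≤ ‖(2 / p ^ 2) • vecMulVec y y‖ + ‖(8 * s ^ 2 / (p ^ 2) ^ 3) • vecMulVec x x‖
        + ‖(2 * s ^ 2 / (p ^ 2) ^ 2) • (1 : Matrix (Fin n) (Fin n) ℝ)‖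
        + (‖(4 * s / (p ^ 2) ^ 2) • vecMulVec x y‖ + ‖(4 * s / (p ^ 2) ^ 2) • vecMulVec y x‖) := by
        rw [hH, smul_add]
        exact (norm_sub_le _ _).trans (add_le_add ((norm_sub_le _ _).trans
          (add_le_add (norm_add_le _ _) le_rfl)) (norm_add_le _ _))
    _ ≤ 2 / p ^ 2 * (q * q) + 8 * s ^ 2 / (p ^ 2) ^ 3 * (p * p) + 2 * s ^ 2 / (p ^ 2) ^ 2 * 1
        + (4 * |s| / (p ^ 2) ^ 2 * (p * q) + 4 * |s| / (p ^ 2) ^ 2 * (q * p)) := by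
        simp only [norm_smul, l2_opNorm_vecMulVec, Real.norm_eq_abs, abs_div, abs_mul, abs_pow,
          Nat.abs_ofNat, abs_of_pos hp, abs_of_nonneg (sq_nonneg s)]
        gcongr
        exact l2_opNorm_one_le
    _ = 2 * (q ^ 2 / p ^ 2) + 10 * (s ^ 2 / p ^ 4) + 8 * (|s| * (p * q) / p ^ 4) := by
        field_simp; ring
    _ ≤ 20 * (q ^ 2 / p ^ 2) := by linarith
    _ = 20 * q ^ 2 / p ^ 2 := (mul_div_assoc _ _ _).symm
end

section
/- Let x, y, w ∈ ℝ^n satisfy x ≥ 0, y ≥ 0, w ≥ 0 componentwise, x ≠ 0, and ‖y‖² + x^⊤w − (x^⊤y)²/‖x‖² = 0. Then x^⊤w = 0 and x^⊤y = ‖x‖·‖y‖; moreover, if y ≠ 0 then y = (‖y‖/‖x‖)·x. -/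
/-!
Cauchy–Schwarz with its defect made explicit: `‖y‖² - ⟪x, y⟫² / ‖x‖²` is the squared distance
from `y` to its projection `(⟪x, y⟫ / ‖x‖²) • x` onto the line through `x`. The objective is this
defect plus `⟪x, w⟫ ≥ 0`, so both vanish and `y` equals its projection. Nonnegativity of `x` and
`y` makes the coefficient `⟪x, y⟫ / ‖x‖²` nonnegative, so `y` lies on the ray through `x`, where
`⟪x, y⟫ = ‖x‖ ‖y‖`.
-/

open scoped RealInnerProductSpace

theorem EuclideanSpace.inner_nonneg_of_nonneg {ι : Type*} [Fintype ι]
    {x y : EuclideanSpace ℝ ι} (hx : ∀ i, 0 ≤ x i) (hy : ∀ i, 0 ≤ y i) : 0 ≤ ⟪x, y⟫ := by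
  rw [PiLp.inner_apply]
  exact Finset.sum_nonneg fun i _ => mul_nonneg (hy i) (hx i)

section

variable {F : Type*} [NormedAddCommGroup F] [InnerProductSpace ℝ F]

theorem norm_sub_inner_div_norm_sq_smul_sq (x y : F) :
    ‖y - (⟪x, y⟫ / ‖x‖ ^ 2) • x‖ ^ 2 = ‖y‖ ^ 2 - ⟪x, y⟫ ^ 2 / ‖x‖ ^ 2 := by
  rcases eq_or_ne x 0 with rfl | hx
  · simp
  have hx' : ‖x‖ ≠ 0 := norm_ne_zero_iff.mpr hx
  rw [norm_sub_sq_real, real_inner_smul_right, real_inner_comm y x, norm_smul, Real.norm_eq_abs,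
    mul_pow, sq_abs]
  field_simp
  ring

theorem real_inner_sq_div_norm_sq_le (x y : F) : ⟪x, y⟫ ^ 2 / ‖x‖ ^ 2 ≤ ‖y‖ ^ 2 :=
  sub_nonneg.mp (norm_sub_inner_div_norm_sq_smul_sq x y ▸ sq_nonneg _)

theorem eq_inner_div_norm_sq_smul_of_inner_sq_div_norm_sq_eq {x y : F}
    (h : ⟪x, y⟫ ^ 2 / ‖x‖ ^ 2 = ‖y‖ ^ 2) : y = (⟪x, y⟫ / ‖x‖ ^ 2) • x := by
  have hdist := norm_sub_inner_div_norm_sq_smul_sq x y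
  rwa [h, sub_self, sq_eq_zero_iff, norm_eq_zero, sub_eq_zero] at hdist

theorem real_inner_nonneg_smul_right_self {t : ℝ} (ht : 0 ≤ t) (x : F) :
    ⟪x, t • x⟫ = ‖x‖ * ‖t • x‖ := by
  rw [real_inner_smul_right, real_inner_self_eq_norm_sq, norm_smul, Real.norm_of_nonneg ht]
  ring

theorem nonneg_smul_eq_norm_div_norm_smul {t : ℝ} (ht : 0 ≤ t) (x : F) :
    t • x = (‖t • x‖ / ‖x‖) • x := by
  rcases eq_or_ne x 0 with rfl | hx
  · simp
  rw [norm_smul, Real.norm_of_nonneg ht, mul_div_cancel_right₀ _ (norm_ne_zero_iff.mpr hx)]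

end

theorem stmt19_general {n : ℕ} (x y w : EuclideanSpace ℝ (Fin n))
    (hx : ∀ i, 0 ≤ x i) (hy : ∀ i, 0 ≤ y i) (hw : ∀ i, 0 ≤ w i)
    (hzero : ‖y‖ ^ 2 + ⟪x, w⟫ - ⟪x, y⟫ ^ 2 / ‖x‖ ^ 2 = 0) :
    ⟪x, w⟫ = 0 ∧ ⟪x, y⟫ = ‖x‖ * ‖y‖ ∧ (y ≠ 0 → y = (‖y‖ / ‖x‖) • x) := by
  have hxw := EuclideanSpace.inner_nonneg_of_nonneg hx hw
  have hcs := real_inner_sq_div_norm_sq_le x y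
  have hxw0 : ⟪x, w⟫ = 0 := by linarith
  obtain ⟨t, ht, hyt⟩ : ∃ t : ℝ, 0 ≤ t ∧ y = t • x :=
    ⟨_, div_nonneg (EuclideanSpace.inner_nonneg_of_nonneg hx hy) (sq_nonneg _),
      eq_inner_div_norm_sq_smul_of_inner_sq_div_norm_sq_eq (by linarith)⟩
  subst hyt
  exact ⟨hxw0, real_inner_nonneg_smul_right_self ht x,
    fun _ => nonneg_smul_eq_norm_div_norm_smul ht x⟩

/-- Key intermediate claim in the proof of Theorem 3.1:
a zero objective value in (NLP3) forces complementarity and equality in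
Cauchy–Schwarz, hence proportionality of `y` and `x`. -/
theorem stmt19 {n : ℕ} (x y w : EuclideanSpace ℝ (Fin n))
    (hx : ∀ i, 0 ≤ x i) (hy : ∀ i, 0 ≤ y i) (hw : ∀ i, 0 ≤ w i)
    (hx0 : x ≠ 0)
    (hzero : ‖y‖ ^ 2 + ⟪x, w⟫ - ⟪x, y⟫ ^ 2 / ‖x‖ ^ 2 = 0) :
    ⟪x, w⟫ = 0 ∧ ⟪x, y⟫ = ‖x‖ * ‖y‖ ∧ (y ≠ 0 → y = (‖y‖ / ‖x‖) • x) :=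
  stmt19_general x y w hx hy hw hzero
end
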